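/- arXiv:2505.09204 — 8 statements merged into one kernel-verified Lean document; each statement's English description precedes it below -/
import Mathlib

section
/- Let k, ℓ be positive integers and n = kℓ. For every g in the special linear group SL(k,ℂ), every h in SL(ℓ,ℂ), every k×n complex matrix A and every ℓ×n complex matrix B, the Segre determinant is invariant: Seg_{k,ℓ}(g·A, h·B) = Seg_{k,ℓ}(A,B), where g·A and h·B denote matrix multiplication on the left. -/
/-- The Segre matrix of `A` and `B`: rows indexed by `(i,j) ∈ [k] × [ℓ]` via `(i,j) ↦ i*ℓ + j`,
columns by `m ∈ [n]`, entry `A i m * B j m`. -/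
noncomputable def segreMatrix (k ℓ : ℕ) (A : Matrix (Fin k) (Fin (k * ℓ)) ℂ)
    (B : Matrix (Fin ℓ) (Fin (k * ℓ)) ℂ) : Matrix (Fin (k * ℓ)) (Fin (k * ℓ)) ℂ :=
  Matrix.of fun r m =>
    A (finProdFinEquiv.symm r).1 m * B (finProdFinEquiv.symm r).2 m

/-- The Segre determinant `Seg_{k,ℓ}(A, B)`. -/
noncomputable def segreDet (k ℓ : ℕ) (A : Matrix (Fin k) (Fin (k * ℓ)) ℂ)
    (B : Matrix (Fin ℓ) (Fin (k * ℓ)) ℂ) : ℂ :=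
  (segreMatrix k ℓ A B).det

open Matrix Kronecker in
/-- **SL-invariance of the Segre determinant.**  For `g ∈ SL(k, ℂ)`, `h ∈ SL(ℓ, ℂ)`,
`Seg_{k,ℓ}(g·A, h·B) = Seg_{k,ℓ}(A, B)`. -/
theorem segreDet_sl_invariant (k ℓ : ℕ) (hk : 0 < k) (hℓ : 0 < ℓ)
    (g : Matrix.SpecialLinearGroup (Fin k) ℂ) (h : Matrix.SpecialLinearGroup (Fin ℓ) ℂ)
    (A : Matrix (Fin k) (Fin (k * ℓ)) ℂ) (B : Matrix (Fin ℓ) (Fin (k * ℓ)) ℂ) :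
    segreDet k ℓ ((g : Matrix (Fin k) (Fin k) ℂ) * A) ((h : Matrix (Fin ℓ) (Fin ℓ) ℂ) * B)
      = segreDet k ℓ A B := by
  set e := (finProdFinEquiv : Fin k × Fin ℓ ≃ Fin (k * ℓ))
  set G := (g : Matrix (Fin k) (Fin k) ℂ)
  set H := (h : Matrix (Fin ℓ) (Fin ℓ) ℂ)
  have key : segreMatrix k ℓ (G * A) (H * B) =
      (Matrix.reindex e e (G ⊗ₖ H)) * segreMatrix k ℓ A B := by
    ext r m
    simp only [segreMatrix, Matrix.mul_apply, Matrix.of_apply, Matrix.reindex_apply,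
      Matrix.submatrix_apply, Matrix.kroneckerMap_apply]
    rw [← e.sum_comp fun c => G (e.symm r).1 (e.symm c).1 * H (e.symm r).2 (e.symm c).2 *
      (A (e.symm c).1 m * B (e.symm c).2 m)]
    simp only [Equiv.symm_apply_apply]
    rw [Fintype.sum_prod_type, Finset.sum_mul_sum]
    apply Finset.sum_congr rfl; intro i _
    apply Finset.sum_congr rfl; intro j _
    ring
  unfold segreDet
  rw [key, Matrix.det_mul, Matrix.det_reindex_self, Matrix.det_kronecker,
    Matrix.SpecialLinearGroup.det_coe, Matrix.SpecialLinearGroup.det_coe]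
  simp
end

section
/- Let A and B be 2×4 complex matrices with 2×2 minors [ij] (for A) and ⟨ij⟩ (for B) as above. Assume [13][24] ≠ 0 and ⟨13⟩⟨24⟩ ≠ 0. Then the Segre determinant Seg_{2,2}(A,B) vanishes if and only if the cross-ratios of the two column configurations agree: [12][34] / ([13][24]) = ⟨12⟩⟨34⟩ / (⟨13⟩⟨24⟩). -/
/-- The `2 × 2` minor of a `2 × n` matrix `M` on columns `i, j`. -/
noncomputable def minor2 {n : ℕ} (M : Matrix (Fin 2) (Fin n) ℂ) (i j : Fin n) : ℂ :=
  M 0 i * M 1 j - M 0 j * M 1 i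

/-! Expanding the `4 × 4` determinant gives the bracket identity
`Seg = [13][24]⟨12⟩⟨34⟩ - [12][34]⟨13⟩⟨24⟩`; dividing by `[13][24]⟨13⟩⟨24⟩` turns its vanishing
into the equality of cross-ratios. -/

open Matrix

theorem segreMatrix_two_two (A B : Matrix (Fin 2) (Fin 4) ℂ) :
    segreMatrix 2 2 A B =
      !![A 0 0 * B 0 0, A 0 1 * B 0 1, A 0 2 * B 0 2, A 0 3 * B 0 3;
         A 0 0 * B 1 0, A 0 1 * B 1 1, A 0 2 * B 1 2, A 0 3 * B 1 3;
         A 1 0 * B 0 0, A 1 1 * B 0 1, A 1 2 * B 0 2, A 1 3 * B 0 3;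
         A 1 0 * B 1 0, A 1 1 * B 1 1, A 1 2 * B 1 2, A 1 3 * B 1 3] := by
  ext r m
  fin_cases r <;> fin_cases m <;> rfl

theorem segreDet_two_two (A B : Matrix (Fin 2) (Fin 4) ℂ) :
    segreDet 2 2 A B =
      minor2 A 0 2 * minor2 A 1 3 * (minor2 B 0 1 * minor2 B 2 3)
        - minor2 A 0 1 * minor2 A 2 3 * (minor2 B 0 2 * minor2 B 1 3) := by
  rw [segreDet, segreMatrix_two_two, det_succ_row_zero, Fin.sum_univ_four]
  simp only [det_fin_three, submatrix_apply, minor2, of_apply, cons_val', cons_val_zero,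
    cons_val_one, cons_val, cons_val_fin_one, Fin.succAbove, Fin.reduceSucc, Fin.reduceCastSucc,
    Fin.reduceLT, Fin.coe_ofNat_eq_mod, ↓reduceIte]
  ring

/-- **`Seg_{2,2}` vanishes iff the cross-ratios agree.**  Assume `[13][24] ≠ 0` and
`⟨13⟩⟨24⟩ ≠ 0` (paper's columns `1,2,3,4` are `0,1,2,3` here).  Then `Seg_{2,2}(A,B) = 0`
iff `[12][34]/([13][24]) = ⟨12⟩⟨34⟩/(⟨13⟩⟨24⟩)`. -/
theorem segreDet_two_two_eq_zero_iff_crossRatio (A B : Matrix (Fin 2) (Fin 4) ℂ)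
    (hA : minor2 A 0 2 * minor2 A 1 3 ≠ 0) (hB : minor2 B 0 2 * minor2 B 1 3 ≠ 0) :
    segreDet 2 2 A B = 0 ↔
      minor2 A 0 1 * minor2 A 2 3 / (minor2 A 0 2 * minor2 A 1 3)
        = minor2 B 0 1 * minor2 B 2 3 / (minor2 B 0 2 * minor2 B 1 3) := by
  rw [segreDet_two_two, sub_eq_zero, div_eq_div_iff hA hB, eq_comm,
    mul_comm (minor2 B 0 1 * _)]
end

section
/- Let A be a 2×6 complex matrix and B a 3×6 complex matrix, with [ij] the 2×2 minor of A on columns i,j and ⟨ijk⟩ the 3×3 minor of B on columns i,j,k. Then Seg_{2,3}(A,B) = ([12][34][56] + [14][25][36])⟨123⟩⟨456⟩ − [13][25][46]⟨124⟩⟨356⟩ + [12][35][46]⟨134⟩⟨256⟩ − [12][34][56]⟨135⟩⟨246⟩ + [13][24][56]⟨125⟩⟨346⟩. -/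
set_option linter.unreachableTactic false
set_option linter.unnecessarySeqFocus false
set_option linter.unusedTactic false
set_option linter.flexible false

/-- The `3 × 3` minor of a `3 × n` matrix `M` on columns `i, j, k`. -/
noncomputable def minor3 {n : ℕ} (M : Matrix (Fin 3) (Fin n) ℂ) (i j k : Fin n) : ℂ :=
  Matrix.det (Matrix.of fun r c : Fin 3 => M r (![i, j, k] c))

set_option maxRecDepth 20000 in
set_option maxHeartbeats 4000000 in
theorem det_fin_4x (M : Matrix (Fin 4) (Fin 4) ℂ) :
    M.det = (0:ℂ)
      + M 0 0*M 1 1*M 2 2*M 3 3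
      - M 0 0*M 1 1*M 2 3*M 3 2
      - M 0 0*M 1 2*M 2 1*M 3 3
      + M 0 0*M 1 2*M 2 3*M 3 1
      + M 0 0*M 1 3*M 2 1*M 3 2
      - M 0 0*M 1 3*M 2 2*M 3 1
      - M 0 1*M 1 0*M 2 2*M 3 3
      + M 0 1*M 1 0*M 2 3*M 3 2
      + M 0 1*M 1 2*M 2 0*M 3 3
      - M 0 1*M 1 2*M 2 3*M 3 0
      - M 0 1*M 1 3*M 2 0*M 3 2
      + M 0 1*M 1 3*M 2 2*M 3 0
      + M 0 2*M 1 0*M 2 1*M 3 3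
      - M 0 2*M 1 0*M 2 3*M 3 1
      - M 0 2*M 1 1*M 2 0*M 3 3
      + M 0 2*M 1 1*M 2 3*M 3 0
      + M 0 2*M 1 3*M 2 0*M 3 1
      - M 0 2*M 1 3*M 2 1*M 3 0
      - M 0 3*M 1 0*M 2 1*M 3 2
      + M 0 3*M 1 0*M 2 2*M 3 1
      + M 0 3*M 1 1*M 2 0*M 3 2
      - M 0 3*M 1 1*M 2 2*M 3 0
      - M 0 3*M 1 2*M 2 0*M 3 1
      + M 0 3*M 1 2*M 2 1*M 3 0 := by
  rw [Matrix.det_succ_row_zero, Fin.sum_univ_four]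
  simp only [Matrix.det_fin_three, Matrix.submatrix_apply,
    show Fin.succ (0:Fin 3) = (1:Fin 4) from rfl,
    show Fin.succ (1:Fin 3) = (2:Fin 4) from rfl,
    show Fin.succ (2:Fin 3) = (3:Fin 4) from rfl,
    show Fin.succAbove (0:Fin 4) (0:Fin 3) = (1:Fin 4) from rfl,
    show Fin.succAbove (0:Fin 4) (1:Fin 3) = (2:Fin 4) from rfl,
    show Fin.succAbove (0:Fin 4) (2:Fin 3) = (3:Fin 4) from rfl,
    show Fin.succAbove (1:Fin 4) (0:Fin 3) = (0:Fin 4) from rfl,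
    show Fin.succAbove (1:Fin 4) (1:Fin 3) = (2:Fin 4) from rfl,
    show Fin.succAbove (1:Fin 4) (2:Fin 3) = (3:Fin 4) from rfl,
    show Fin.succAbove (2:Fin 4) (0:Fin 3) = (0:Fin 4) from rfl,
    show Fin.succAbove (2:Fin 4) (1:Fin 3) = (1:Fin 4) from rfl,
    show Fin.succAbove (2:Fin 4) (2:Fin 3) = (3:Fin 4) from rfl,
    show Fin.succAbove (3:Fin 4) (0:Fin 3) = (0:Fin 4) from rfl,
    show Fin.succAbove (3:Fin 4) (1:Fin 3) = (1:Fin 4) from rfl,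
    show Fin.succAbove (3:Fin 4) (2:Fin 3) = (2:Fin 4) from rfl,
    show (((0:Fin 4):ℕ)) = 0 from rfl,
    show (((1:Fin 4):ℕ)) = 1 from rfl,
    show (((2:Fin 4):ℕ)) = 2 from rfl,
    show (((3:Fin 4):ℕ)) = 3 from rfl]
  norm_num
  ring
set_option maxRecDepth 20000 in
set_option maxHeartbeats 4000000 in
theorem det_fin_5x (M : Matrix (Fin 5) (Fin 5) ℂ) :
    M.det = (0:ℂ)
      + M 0 0*M 1 1*M 2 2*M 3 3*M 4 4
      - M 0 0*M 1 1*M 2 2*M 3 4*M 4 3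
      - M 0 0*M 1 1*M 2 3*M 3 2*M 4 4
      + M 0 0*M 1 1*M 2 3*M 3 4*M 4 2
      + M 0 0*M 1 1*M 2 4*M 3 2*M 4 3
      - M 0 0*M 1 1*M 2 4*M 3 3*M 4 2
      - M 0 0*M 1 2*M 2 1*M 3 3*M 4 4
      + M 0 0*M 1 2*M 2 1*M 3 4*M 4 3
      + M 0 0*M 1 2*M 2 3*M 3 1*M 4 4
      - M 0 0*M 1 2*M 2 3*M 3 4*M 4 1
      - M 0 0*M 1 2*M 2 4*M 3 1*M 4 3
      + M 0 0*M 1 2*M 2 4*M 3 3*M 4 1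
      + M 0 0*M 1 3*M 2 1*M 3 2*M 4 4
      - M 0 0*M 1 3*M 2 1*M 3 4*M 4 2
      - M 0 0*M 1 3*M 2 2*M 3 1*M 4 4
      + M 0 0*M 1 3*M 2 2*M 3 4*M 4 1
      + M 0 0*M 1 3*M 2 4*M 3 1*M 4 2
      - M 0 0*M 1 3*M 2 4*M 3 2*M 4 1
      - M 0 0*M 1 4*M 2 1*M 3 2*M 4 3
      + M 0 0*M 1 4*M 2 1*M 3 3*M 4 2
      + M 0 0*M 1 4*M 2 2*M 3 1*M 4 3
      - M 0 0*M 1 4*M 2 2*M 3 3*M 4 1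
      - M 0 0*M 1 4*M 2 3*M 3 1*M 4 2
      + M 0 0*M 1 4*M 2 3*M 3 2*M 4 1
      - M 0 1*M 1 0*M 2 2*M 3 3*M 4 4
      + M 0 1*M 1 0*M 2 2*M 3 4*M 4 3
      + M 0 1*M 1 0*M 2 3*M 3 2*M 4 4
      - M 0 1*M 1 0*M 2 3*M 3 4*M 4 2
      - M 0 1*M 1 0*M 2 4*M 3 2*M 4 3
      + M 0 1*M 1 0*M 2 4*M 3 3*M 4 2
      + M 0 1*M 1 2*M 2 0*M 3 3*M 4 4
      - M 0 1*M 1 2*M 2 0*M 3 4*M 4 3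
      - M 0 1*M 1 2*M 2 3*M 3 0*M 4 4
      + M 0 1*M 1 2*M 2 3*M 3 4*M 4 0
      + M 0 1*M 1 2*M 2 4*M 3 0*M 4 3
      - M 0 1*M 1 2*M 2 4*M 3 3*M 4 0
      - M 0 1*M 1 3*M 2 0*M 3 2*M 4 4
      + M 0 1*M 1 3*M 2 0*M 3 4*M 4 2
      + M 0 1*M 1 3*M 2 2*M 3 0*M 4 4
      - M 0 1*M 1 3*M 2 2*M 3 4*M 4 0
      - M 0 1*M 1 3*M 2 4*M 3 0*M 4 2
      + M 0 1*M 1 3*M 2 4*M 3 2*M 4 0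
      + M 0 1*M 1 4*M 2 0*M 3 2*M 4 3
      - M 0 1*M 1 4*M 2 0*M 3 3*M 4 2
      - M 0 1*M 1 4*M 2 2*M 3 0*M 4 3
      + M 0 1*M 1 4*M 2 2*M 3 3*M 4 0
      + M 0 1*M 1 4*M 2 3*M 3 0*M 4 2
      - M 0 1*M 1 4*M 2 3*M 3 2*M 4 0
      + M 0 2*M 1 0*M 2 1*M 3 3*M 4 4
      - M 0 2*M 1 0*M 2 1*M 3 4*M 4 3
      - M 0 2*M 1 0*M 2 3*M 3 1*M 4 4
      + M 0 2*M 1 0*M 2 3*M 3 4*M 4 1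
      + M 0 2*M 1 0*M 2 4*M 3 1*M 4 3
      - M 0 2*M 1 0*M 2 4*M 3 3*M 4 1
      - M 0 2*M 1 1*M 2 0*M 3 3*M 4 4
      + M 0 2*M 1 1*M 2 0*M 3 4*M 4 3
      + M 0 2*M 1 1*M 2 3*M 3 0*M 4 4
      - M 0 2*M 1 1*M 2 3*M 3 4*M 4 0
      - M 0 2*M 1 1*M 2 4*M 3 0*M 4 3
      + M 0 2*M 1 1*M 2 4*M 3 3*M 4 0
      + M 0 2*M 1 3*M 2 0*M 3 1*M 4 4
      - M 0 2*M 1 3*M 2 0*M 3 4*M 4 1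
      - M 0 2*M 1 3*M 2 1*M 3 0*M 4 4
      + M 0 2*M 1 3*M 2 1*M 3 4*M 4 0
      + M 0 2*M 1 3*M 2 4*M 3 0*M 4 1
      - M 0 2*M 1 3*M 2 4*M 3 1*M 4 0
      - M 0 2*M 1 4*M 2 0*M 3 1*M 4 3
      + M 0 2*M 1 4*M 2 0*M 3 3*M 4 1
      + M 0 2*M 1 4*M 2 1*M 3 0*M 4 3
      - M 0 2*M 1 4*M 2 1*M 3 3*M 4 0
      - M 0 2*M 1 4*M 2 3*M 3 0*M 4 1
      + M 0 2*M 1 4*M 2 3*M 3 1*M 4 0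
      - M 0 3*M 1 0*M 2 1*M 3 2*M 4 4
      + M 0 3*M 1 0*M 2 1*M 3 4*M 4 2
      + M 0 3*M 1 0*M 2 2*M 3 1*M 4 4
      - M 0 3*M 1 0*M 2 2*M 3 4*M 4 1
      - M 0 3*M 1 0*M 2 4*M 3 1*M 4 2
      + M 0 3*M 1 0*M 2 4*M 3 2*M 4 1
      + M 0 3*M 1 1*M 2 0*M 3 2*M 4 4
      - M 0 3*M 1 1*M 2 0*M 3 4*M 4 2
      - M 0 3*M 1 1*M 2 2*M 3 0*M 4 4
      + M 0 3*M 1 1*M 2 2*M 3 4*M 4 0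
      + M 0 3*M 1 1*M 2 4*M 3 0*M 4 2
      - M 0 3*M 1 1*M 2 4*M 3 2*M 4 0
      - M 0 3*M 1 2*M 2 0*M 3 1*M 4 4
      + M 0 3*M 1 2*M 2 0*M 3 4*M 4 1
      + M 0 3*M 1 2*M 2 1*M 3 0*M 4 4
      - M 0 3*M 1 2*M 2 1*M 3 4*M 4 0
      - M 0 3*M 1 2*M 2 4*M 3 0*M 4 1
      + M 0 3*M 1 2*M 2 4*M 3 1*M 4 0
      + M 0 3*M 1 4*M 2 0*M 3 1*M 4 2
      - M 0 3*M 1 4*M 2 0*M 3 2*M 4 1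
      - M 0 3*M 1 4*M 2 1*M 3 0*M 4 2
      + M 0 3*M 1 4*M 2 1*M 3 2*M 4 0
      + M 0 3*M 1 4*M 2 2*M 3 0*M 4 1
      - M 0 3*M 1 4*M 2 2*M 3 1*M 4 0
      + M 0 4*M 1 0*M 2 1*M 3 2*M 4 3
      - M 0 4*M 1 0*M 2 1*M 3 3*M 4 2
      - M 0 4*M 1 0*M 2 2*M 3 1*M 4 3
      + M 0 4*M 1 0*M 2 2*M 3 3*M 4 1
      + M 0 4*M 1 0*M 2 3*M 3 1*M 4 2
      - M 0 4*M 1 0*M 2 3*M 3 2*M 4 1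
      - M 0 4*M 1 1*M 2 0*M 3 2*M 4 3
      + M 0 4*M 1 1*M 2 0*M 3 3*M 4 2
      + M 0 4*M 1 1*M 2 2*M 3 0*M 4 3
      - M 0 4*M 1 1*M 2 2*M 3 3*M 4 0
      - M 0 4*M 1 1*M 2 3*M 3 0*M 4 2
      + M 0 4*M 1 1*M 2 3*M 3 2*M 4 0
      + M 0 4*M 1 2*M 2 0*M 3 1*M 4 3
      - M 0 4*M 1 2*M 2 0*M 3 3*M 4 1
      - M 0 4*M 1 2*M 2 1*M 3 0*M 4 3
      + M 0 4*M 1 2*M 2 1*M 3 3*M 4 0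
      + M 0 4*M 1 2*M 2 3*M 3 0*M 4 1
      - M 0 4*M 1 2*M 2 3*M 3 1*M 4 0
      - M 0 4*M 1 3*M 2 0*M 3 1*M 4 2
      + M 0 4*M 1 3*M 2 0*M 3 2*M 4 1
      + M 0 4*M 1 3*M 2 1*M 3 0*M 4 2
      - M 0 4*M 1 3*M 2 1*M 3 2*M 4 0
      - M 0 4*M 1 3*M 2 2*M 3 0*M 4 1
      + M 0 4*M 1 3*M 2 2*M 3 1*M 4 0 := by
  rw [Matrix.det_succ_row_zero, Fin.sum_univ_five]
  simp only [det_fin_4x, Matrix.submatrix_apply,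
    show Fin.succ (0:Fin 4) = (1:Fin 5) from rfl,
    show Fin.succ (1:Fin 4) = (2:Fin 5) from rfl,
    show Fin.succ (2:Fin 4) = (3:Fin 5) from rfl,
    show Fin.succ (3:Fin 4) = (4:Fin 5) from rfl,
    show Fin.succAbove (0:Fin 5) (0:Fin 4) = (1:Fin 5) from rfl,
    show Fin.succAbove (0:Fin 5) (1:Fin 4) = (2:Fin 5) from rfl,
    show Fin.succAbove (0:Fin 5) (2:Fin 4) = (3:Fin 5) from rfl,
    show Fin.succAbove (0:Fin 5) (3:Fin 4) = (4:Fin 5) from rfl,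
    show Fin.succAbove (1:Fin 5) (0:Fin 4) = (0:Fin 5) from rfl,
    show Fin.succAbove (1:Fin 5) (1:Fin 4) = (2:Fin 5) from rfl,
    show Fin.succAbove (1:Fin 5) (2:Fin 4) = (3:Fin 5) from rfl,
    show Fin.succAbove (1:Fin 5) (3:Fin 4) = (4:Fin 5) from rfl,
    show Fin.succAbove (2:Fin 5) (0:Fin 4) = (0:Fin 5) from rfl,
    show Fin.succAbove (2:Fin 5) (1:Fin 4) = (1:Fin 5) from rfl,
    show Fin.succAbove (2:Fin 5) (2:Fin 4) = (3:Fin 5) from rfl,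
    show Fin.succAbove (2:Fin 5) (3:Fin 4) = (4:Fin 5) from rfl,
    show Fin.succAbove (3:Fin 5) (0:Fin 4) = (0:Fin 5) from rfl,
    show Fin.succAbove (3:Fin 5) (1:Fin 4) = (1:Fin 5) from rfl,
    show Fin.succAbove (3:Fin 5) (2:Fin 4) = (2:Fin 5) from rfl,
    show Fin.succAbove (3:Fin 5) (3:Fin 4) = (4:Fin 5) from rfl,
    show Fin.succAbove (4:Fin 5) (0:Fin 4) = (0:Fin 5) from rfl,
    show Fin.succAbove (4:Fin 5) (1:Fin 4) = (1:Fin 5) from rfl,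
    show Fin.succAbove (4:Fin 5) (2:Fin 4) = (2:Fin 5) from rfl,
    show Fin.succAbove (4:Fin 5) (3:Fin 4) = (3:Fin 5) from rfl,
    show (((0:Fin 5):ℕ)) = 0 from rfl,
    show (((1:Fin 5):ℕ)) = 1 from rfl,
    show (((2:Fin 5):ℕ)) = 2 from rfl,
    show (((3:Fin 5):ℕ)) = 3 from rfl,
    show (((4:Fin 5):ℕ)) = 4 from rfl]
  norm_num
  ring
set_option maxRecDepth 20000 in
set_option maxHeartbeats 4000000 in
theorem det_fin_6x (M : Matrix (Fin 6) (Fin 6) ℂ) :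
    M.det = (0:ℂ)
      + M 0 0*M 1 1*M 2 2*M 3 3*M 4 4*M 5 5
      - M 0 0*M 1 1*M 2 2*M 3 3*M 4 5*M 5 4
      - M 0 0*M 1 1*M 2 2*M 3 4*M 4 3*M 5 5
      + M 0 0*M 1 1*M 2 2*M 3 4*M 4 5*M 5 3
      + M 0 0*M 1 1*M 2 2*M 3 5*M 4 3*M 5 4
      - M 0 0*M 1 1*M 2 2*M 3 5*M 4 4*M 5 3
      - M 0 0*M 1 1*M 2 3*M 3 2*M 4 4*M 5 5
      + M 0 0*M 1 1*M 2 3*M 3 2*M 4 5*M 5 4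
      + M 0 0*M 1 1*M 2 3*M 3 4*M 4 2*M 5 5
      - M 0 0*M 1 1*M 2 3*M 3 4*M 4 5*M 5 2
      - M 0 0*M 1 1*M 2 3*M 3 5*M 4 2*M 5 4
      + M 0 0*M 1 1*M 2 3*M 3 5*M 4 4*M 5 2
      + M 0 0*M 1 1*M 2 4*M 3 2*M 4 3*M 5 5
      - M 0 0*M 1 1*M 2 4*M 3 2*M 4 5*M 5 3
      - M 0 0*M 1 1*M 2 4*M 3 3*M 4 2*M 5 5
      + M 0 0*M 1 1*M 2 4*M 3 3*M 4 5*M 5 2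
      + M 0 0*M 1 1*M 2 4*M 3 5*M 4 2*M 5 3
      - M 0 0*M 1 1*M 2 4*M 3 5*M 4 3*M 5 2
      - M 0 0*M 1 1*M 2 5*M 3 2*M 4 3*M 5 4
      + M 0 0*M 1 1*M 2 5*M 3 2*M 4 4*M 5 3
      + M 0 0*M 1 1*M 2 5*M 3 3*M 4 2*M 5 4
      - M 0 0*M 1 1*M 2 5*M 3 3*M 4 4*M 5 2
      - M 0 0*M 1 1*M 2 5*M 3 4*M 4 2*M 5 3
      + M 0 0*M 1 1*M 2 5*M 3 4*M 4 3*M 5 2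
      - M 0 0*M 1 2*M 2 1*M 3 3*M 4 4*M 5 5
      + M 0 0*M 1 2*M 2 1*M 3 3*M 4 5*M 5 4
      + M 0 0*M 1 2*M 2 1*M 3 4*M 4 3*M 5 5
      - M 0 0*M 1 2*M 2 1*M 3 4*M 4 5*M 5 3
      - M 0 0*M 1 2*M 2 1*M 3 5*M 4 3*M 5 4
      + M 0 0*M 1 2*M 2 1*M 3 5*M 4 4*M 5 3
      + M 0 0*M 1 2*M 2 3*M 3 1*M 4 4*M 5 5
      - M 0 0*M 1 2*M 2 3*M 3 1*M 4 5*M 5 4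
      - M 0 0*M 1 2*M 2 3*M 3 4*M 4 1*M 5 5
      + M 0 0*M 1 2*M 2 3*M 3 4*M 4 5*M 5 1
      + M 0 0*M 1 2*M 2 3*M 3 5*M 4 1*M 5 4
      - M 0 0*M 1 2*M 2 3*M 3 5*M 4 4*M 5 1
      - M 0 0*M 1 2*M 2 4*M 3 1*M 4 3*M 5 5
      + M 0 0*M 1 2*M 2 4*M 3 1*M 4 5*M 5 3
      + M 0 0*M 1 2*M 2 4*M 3 3*M 4 1*M 5 5
      - M 0 0*M 1 2*M 2 4*M 3 3*M 4 5*M 5 1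
      - M 0 0*M 1 2*M 2 4*M 3 5*M 4 1*M 5 3
      + M 0 0*M 1 2*M 2 4*M 3 5*M 4 3*M 5 1
      + M 0 0*M 1 2*M 2 5*M 3 1*M 4 3*M 5 4
      - M 0 0*M 1 2*M 2 5*M 3 1*M 4 4*M 5 3
      - M 0 0*M 1 2*M 2 5*M 3 3*M 4 1*M 5 4
      + M 0 0*M 1 2*M 2 5*M 3 3*M 4 4*M 5 1
      + M 0 0*M 1 2*M 2 5*M 3 4*M 4 1*M 5 3
      - M 0 0*M 1 2*M 2 5*M 3 4*M 4 3*M 5 1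
      + M 0 0*M 1 3*M 2 1*M 3 2*M 4 4*M 5 5
      - M 0 0*M 1 3*M 2 1*M 3 2*M 4 5*M 5 4
      - M 0 0*M 1 3*M 2 1*M 3 4*M 4 2*M 5 5
      + M 0 0*M 1 3*M 2 1*M 3 4*M 4 5*M 5 2
      + M 0 0*M 1 3*M 2 1*M 3 5*M 4 2*M 5 4
      - M 0 0*M 1 3*M 2 1*M 3 5*M 4 4*M 5 2
      - M 0 0*M 1 3*M 2 2*M 3 1*M 4 4*M 5 5
      + M 0 0*M 1 3*M 2 2*M 3 1*M 4 5*M 5 4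
      + M 0 0*M 1 3*M 2 2*M 3 4*M 4 1*M 5 5
      - M 0 0*M 1 3*M 2 2*M 3 4*M 4 5*M 5 1
      - M 0 0*M 1 3*M 2 2*M 3 5*M 4 1*M 5 4
      + M 0 0*M 1 3*M 2 2*M 3 5*M 4 4*M 5 1
      + M 0 0*M 1 3*M 2 4*M 3 1*M 4 2*M 5 5
      - M 0 0*M 1 3*M 2 4*M 3 1*M 4 5*M 5 2
      - M 0 0*M 1 3*M 2 4*M 3 2*M 4 1*M 5 5
      + M 0 0*M 1 3*M 2 4*M 3 2*M 4 5*M 5 1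
      + M 0 0*M 1 3*M 2 4*M 3 5*M 4 1*M 5 2
      - M 0 0*M 1 3*M 2 4*M 3 5*M 4 2*M 5 1
      - M 0 0*M 1 3*M 2 5*M 3 1*M 4 2*M 5 4
      + M 0 0*M 1 3*M 2 5*M 3 1*M 4 4*M 5 2
      + M 0 0*M 1 3*M 2 5*M 3 2*M 4 1*M 5 4
      - M 0 0*M 1 3*M 2 5*M 3 2*M 4 4*M 5 1
      - M 0 0*M 1 3*M 2 5*M 3 4*M 4 1*M 5 2
      + M 0 0*M 1 3*M 2 5*M 3 4*M 4 2*M 5 1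
      - M 0 0*M 1 4*M 2 1*M 3 2*M 4 3*M 5 5
      + M 0 0*M 1 4*M 2 1*M 3 2*M 4 5*M 5 3
      + M 0 0*M 1 4*M 2 1*M 3 3*M 4 2*M 5 5
      - M 0 0*M 1 4*M 2 1*M 3 3*M 4 5*M 5 2
      - M 0 0*M 1 4*M 2 1*M 3 5*M 4 2*M 5 3
      + M 0 0*M 1 4*M 2 1*M 3 5*M 4 3*M 5 2
      + M 0 0*M 1 4*M 2 2*M 3 1*M 4 3*M 5 5
      - M 0 0*M 1 4*M 2 2*M 3 1*M 4 5*M 5 3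
      - M 0 0*M 1 4*M 2 2*M 3 3*M 4 1*M 5 5
      + M 0 0*M 1 4*M 2 2*M 3 3*M 4 5*M 5 1
      + M 0 0*M 1 4*M 2 2*M 3 5*M 4 1*M 5 3
      - M 0 0*M 1 4*M 2 2*M 3 5*M 4 3*M 5 1
      - M 0 0*M 1 4*M 2 3*M 3 1*M 4 2*M 5 5
      + M 0 0*M 1 4*M 2 3*M 3 1*M 4 5*M 5 2
      + M 0 0*M 1 4*M 2 3*M 3 2*M 4 1*M 5 5
      - M 0 0*M 1 4*M 2 3*M 3 2*M 4 5*M 5 1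
      - M 0 0*M 1 4*M 2 3*M 3 5*M 4 1*M 5 2
      + M 0 0*M 1 4*M 2 3*M 3 5*M 4 2*M 5 1
      + M 0 0*M 1 4*M 2 5*M 3 1*M 4 2*M 5 3
      - M 0 0*M 1 4*M 2 5*M 3 1*M 4 3*M 5 2
      - M 0 0*M 1 4*M 2 5*M 3 2*M 4 1*M 5 3
      + M 0 0*M 1 4*M 2 5*M 3 2*M 4 3*M 5 1
      + M 0 0*M 1 4*M 2 5*M 3 3*M 4 1*M 5 2
      - M 0 0*M 1 4*M 2 5*M 3 3*M 4 2*M 5 1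
      + M 0 0*M 1 5*M 2 1*M 3 2*M 4 3*M 5 4
      - M 0 0*M 1 5*M 2 1*M 3 2*M 4 4*M 5 3
      - M 0 0*M 1 5*M 2 1*M 3 3*M 4 2*M 5 4
      + M 0 0*M 1 5*M 2 1*M 3 3*M 4 4*M 5 2
      + M 0 0*M 1 5*M 2 1*M 3 4*M 4 2*M 5 3
      - M 0 0*M 1 5*M 2 1*M 3 4*M 4 3*M 5 2
      - M 0 0*M 1 5*M 2 2*M 3 1*M 4 3*M 5 4
      + M 0 0*M 1 5*M 2 2*M 3 1*M 4 4*M 5 3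
      + M 0 0*M 1 5*M 2 2*M 3 3*M 4 1*M 5 4
      - M 0 0*M 1 5*M 2 2*M 3 3*M 4 4*M 5 1
      - M 0 0*M 1 5*M 2 2*M 3 4*M 4 1*M 5 3
      + M 0 0*M 1 5*M 2 2*M 3 4*M 4 3*M 5 1
      + M 0 0*M 1 5*M 2 3*M 3 1*M 4 2*M 5 4
      - M 0 0*M 1 5*M 2 3*M 3 1*M 4 4*M 5 2
      - M 0 0*M 1 5*M 2 3*M 3 2*M 4 1*M 5 4
      + M 0 0*M 1 5*M 2 3*M 3 2*M 4 4*M 5 1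
      + M 0 0*M 1 5*M 2 3*M 3 4*M 4 1*M 5 2
      - M 0 0*M 1 5*M 2 3*M 3 4*M 4 2*M 5 1
      - M 0 0*M 1 5*M 2 4*M 3 1*M 4 2*M 5 3
      + M 0 0*M 1 5*M 2 4*M 3 1*M 4 3*M 5 2
      + M 0 0*M 1 5*M 2 4*M 3 2*M 4 1*M 5 3
      - M 0 0*M 1 5*M 2 4*M 3 2*M 4 3*M 5 1
      - M 0 0*M 1 5*M 2 4*M 3 3*M 4 1*M 5 2
      + M 0 0*M 1 5*M 2 4*M 3 3*M 4 2*M 5 1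
      - M 0 1*M 1 0*M 2 2*M 3 3*M 4 4*M 5 5
      + M 0 1*M 1 0*M 2 2*M 3 3*M 4 5*M 5 4
      + M 0 1*M 1 0*M 2 2*M 3 4*M 4 3*M 5 5
      - M 0 1*M 1 0*M 2 2*M 3 4*M 4 5*M 5 3
      - M 0 1*M 1 0*M 2 2*M 3 5*M 4 3*M 5 4
      + M 0 1*M 1 0*M 2 2*M 3 5*M 4 4*M 5 3
      + M 0 1*M 1 0*M 2 3*M 3 2*M 4 4*M 5 5
      - M 0 1*M 1 0*M 2 3*M 3 2*M 4 5*M 5 4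
      - M 0 1*M 1 0*M 2 3*M 3 4*M 4 2*M 5 5
      + M 0 1*M 1 0*M 2 3*M 3 4*M 4 5*M 5 2
      + M 0 1*M 1 0*M 2 3*M 3 5*M 4 2*M 5 4
      - M 0 1*M 1 0*M 2 3*M 3 5*M 4 4*M 5 2
      - M 0 1*M 1 0*M 2 4*M 3 2*M 4 3*M 5 5
      + M 0 1*M 1 0*M 2 4*M 3 2*M 4 5*M 5 3
      + M 0 1*M 1 0*M 2 4*M 3 3*M 4 2*M 5 5
      - M 0 1*M 1 0*M 2 4*M 3 3*M 4 5*M 5 2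
      - M 0 1*M 1 0*M 2 4*M 3 5*M 4 2*M 5 3
      + M 0 1*M 1 0*M 2 4*M 3 5*M 4 3*M 5 2
      + M 0 1*M 1 0*M 2 5*M 3 2*M 4 3*M 5 4
      - M 0 1*M 1 0*M 2 5*M 3 2*M 4 4*M 5 3
      - M 0 1*M 1 0*M 2 5*M 3 3*M 4 2*M 5 4
      + M 0 1*M 1 0*M 2 5*M 3 3*M 4 4*M 5 2
      + M 0 1*M 1 0*M 2 5*M 3 4*M 4 2*M 5 3
      - M 0 1*M 1 0*M 2 5*M 3 4*M 4 3*M 5 2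
      + M 0 1*M 1 2*M 2 0*M 3 3*M 4 4*M 5 5
      - M 0 1*M 1 2*M 2 0*M 3 3*M 4 5*M 5 4
      - M 0 1*M 1 2*M 2 0*M 3 4*M 4 3*M 5 5
      + M 0 1*M 1 2*M 2 0*M 3 4*M 4 5*M 5 3
      + M 0 1*M 1 2*M 2 0*M 3 5*M 4 3*M 5 4
      - M 0 1*M 1 2*M 2 0*M 3 5*M 4 4*M 5 3
      - M 0 1*M 1 2*M 2 3*M 3 0*M 4 4*M 5 5
      + M 0 1*M 1 2*M 2 3*M 3 0*M 4 5*M 5 4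
      + M 0 1*M 1 2*M 2 3*M 3 4*M 4 0*M 5 5
      - M 0 1*M 1 2*M 2 3*M 3 4*M 4 5*M 5 0
      - M 0 1*M 1 2*M 2 3*M 3 5*M 4 0*M 5 4
      + M 0 1*M 1 2*M 2 3*M 3 5*M 4 4*M 5 0
      + M 0 1*M 1 2*M 2 4*M 3 0*M 4 3*M 5 5
      - M 0 1*M 1 2*M 2 4*M 3 0*M 4 5*M 5 3
      - M 0 1*M 1 2*M 2 4*M 3 3*M 4 0*M 5 5
      + M 0 1*M 1 2*M 2 4*M 3 3*M 4 5*M 5 0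
      + M 0 1*M 1 2*M 2 4*M 3 5*M 4 0*M 5 3
      - M 0 1*M 1 2*M 2 4*M 3 5*M 4 3*M 5 0
      - M 0 1*M 1 2*M 2 5*M 3 0*M 4 3*M 5 4
      + M 0 1*M 1 2*M 2 5*M 3 0*M 4 4*M 5 3
      + M 0 1*M 1 2*M 2 5*M 3 3*M 4 0*M 5 4
      - M 0 1*M 1 2*M 2 5*M 3 3*M 4 4*M 5 0
      - M 0 1*M 1 2*M 2 5*M 3 4*M 4 0*M 5 3
      + M 0 1*M 1 2*M 2 5*M 3 4*M 4 3*M 5 0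
      - M 0 1*M 1 3*M 2 0*M 3 2*M 4 4*M 5 5
      + M 0 1*M 1 3*M 2 0*M 3 2*M 4 5*M 5 4
      + M 0 1*M 1 3*M 2 0*M 3 4*M 4 2*M 5 5
      - M 0 1*M 1 3*M 2 0*M 3 4*M 4 5*M 5 2
      - M 0 1*M 1 3*M 2 0*M 3 5*M 4 2*M 5 4
      + M 0 1*M 1 3*M 2 0*M 3 5*M 4 4*M 5 2
      + M 0 1*M 1 3*M 2 2*M 3 0*M 4 4*M 5 5
      - M 0 1*M 1 3*M 2 2*M 3 0*M 4 5*M 5 4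
      - M 0 1*M 1 3*M 2 2*M 3 4*M 4 0*M 5 5
      + M 0 1*M 1 3*M 2 2*M 3 4*M 4 5*M 5 0
      + M 0 1*M 1 3*M 2 2*M 3 5*M 4 0*M 5 4
      - M 0 1*M 1 3*M 2 2*M 3 5*M 4 4*M 5 0
      - M 0 1*M 1 3*M 2 4*M 3 0*M 4 2*M 5 5
      + M 0 1*M 1 3*M 2 4*M 3 0*M 4 5*M 5 2
      + M 0 1*M 1 3*M 2 4*M 3 2*M 4 0*M 5 5
      - M 0 1*M 1 3*M 2 4*M 3 2*M 4 5*M 5 0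
      - M 0 1*M 1 3*M 2 4*M 3 5*M 4 0*M 5 2
      + M 0 1*M 1 3*M 2 4*M 3 5*M 4 2*M 5 0
      + M 0 1*M 1 3*M 2 5*M 3 0*M 4 2*M 5 4
      - M 0 1*M 1 3*M 2 5*M 3 0*M 4 4*M 5 2
      - M 0 1*M 1 3*M 2 5*M 3 2*M 4 0*M 5 4
      + M 0 1*M 1 3*M 2 5*M 3 2*M 4 4*M 5 0
      + M 0 1*M 1 3*M 2 5*M 3 4*M 4 0*M 5 2
      - M 0 1*M 1 3*M 2 5*M 3 4*M 4 2*M 5 0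
      + M 0 1*M 1 4*M 2 0*M 3 2*M 4 3*M 5 5
      - M 0 1*M 1 4*M 2 0*M 3 2*M 4 5*M 5 3
      - M 0 1*M 1 4*M 2 0*M 3 3*M 4 2*M 5 5
      + M 0 1*M 1 4*M 2 0*M 3 3*M 4 5*M 5 2
      + M 0 1*M 1 4*M 2 0*M 3 5*M 4 2*M 5 3
      - M 0 1*M 1 4*M 2 0*M 3 5*M 4 3*M 5 2
      - M 0 1*M 1 4*M 2 2*M 3 0*M 4 3*M 5 5
      + M 0 1*M 1 4*M 2 2*M 3 0*M 4 5*M 5 3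
      + M 0 1*M 1 4*M 2 2*M 3 3*M 4 0*M 5 5
      - M 0 1*M 1 4*M 2 2*M 3 3*M 4 5*M 5 0
      - M 0 1*M 1 4*M 2 2*M 3 5*M 4 0*M 5 3
      + M 0 1*M 1 4*M 2 2*M 3 5*M 4 3*M 5 0
      + M 0 1*M 1 4*M 2 3*M 3 0*M 4 2*M 5 5
      - M 0 1*M 1 4*M 2 3*M 3 0*M 4 5*M 5 2
      - M 0 1*M 1 4*M 2 3*M 3 2*M 4 0*M 5 5
      + M 0 1*M 1 4*M 2 3*M 3 2*M 4 5*M 5 0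
      + M 0 1*M 1 4*M 2 3*M 3 5*M 4 0*M 5 2
      - M 0 1*M 1 4*M 2 3*M 3 5*M 4 2*M 5 0
      - M 0 1*M 1 4*M 2 5*M 3 0*M 4 2*M 5 3
      + M 0 1*M 1 4*M 2 5*M 3 0*M 4 3*M 5 2
      + M 0 1*M 1 4*M 2 5*M 3 2*M 4 0*M 5 3
      - M 0 1*M 1 4*M 2 5*M 3 2*M 4 3*M 5 0
      - M 0 1*M 1 4*M 2 5*M 3 3*M 4 0*M 5 2
      + M 0 1*M 1 4*M 2 5*M 3 3*M 4 2*M 5 0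
      - M 0 1*M 1 5*M 2 0*M 3 2*M 4 3*M 5 4
      + M 0 1*M 1 5*M 2 0*M 3 2*M 4 4*M 5 3
      + M 0 1*M 1 5*M 2 0*M 3 3*M 4 2*M 5 4
      - M 0 1*M 1 5*M 2 0*M 3 3*M 4 4*M 5 2
      - M 0 1*M 1 5*M 2 0*M 3 4*M 4 2*M 5 3
      + M 0 1*M 1 5*M 2 0*M 3 4*M 4 3*M 5 2
      + M 0 1*M 1 5*M 2 2*M 3 0*M 4 3*M 5 4
      - M 0 1*M 1 5*M 2 2*M 3 0*M 4 4*M 5 3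
      - M 0 1*M 1 5*M 2 2*M 3 3*M 4 0*M 5 4
      + M 0 1*M 1 5*M 2 2*M 3 3*M 4 4*M 5 0
      + M 0 1*M 1 5*M 2 2*M 3 4*M 4 0*M 5 3
      - M 0 1*M 1 5*M 2 2*M 3 4*M 4 3*M 5 0
      - M 0 1*M 1 5*M 2 3*M 3 0*M 4 2*M 5 4
      + M 0 1*M 1 5*M 2 3*M 3 0*M 4 4*M 5 2
      + M 0 1*M 1 5*M 2 3*M 3 2*M 4 0*M 5 4
      - M 0 1*M 1 5*M 2 3*M 3 2*M 4 4*M 5 0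
      - M 0 1*M 1 5*M 2 3*M 3 4*M 4 0*M 5 2
      + M 0 1*M 1 5*M 2 3*M 3 4*M 4 2*M 5 0
      + M 0 1*M 1 5*M 2 4*M 3 0*M 4 2*M 5 3
      - M 0 1*M 1 5*M 2 4*M 3 0*M 4 3*M 5 2
      - M 0 1*M 1 5*M 2 4*M 3 2*M 4 0*M 5 3
      + M 0 1*M 1 5*M 2 4*M 3 2*M 4 3*M 5 0
      + M 0 1*M 1 5*M 2 4*M 3 3*M 4 0*M 5 2
      - M 0 1*M 1 5*M 2 4*M 3 3*M 4 2*M 5 0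
      + M 0 2*M 1 0*M 2 1*M 3 3*M 4 4*M 5 5
      - M 0 2*M 1 0*M 2 1*M 3 3*M 4 5*M 5 4
      - M 0 2*M 1 0*M 2 1*M 3 4*M 4 3*M 5 5
      + M 0 2*M 1 0*M 2 1*M 3 4*M 4 5*M 5 3
      + M 0 2*M 1 0*M 2 1*M 3 5*M 4 3*M 5 4
      - M 0 2*M 1 0*M 2 1*M 3 5*M 4 4*M 5 3
      - M 0 2*M 1 0*M 2 3*M 3 1*M 4 4*M 5 5
      + M 0 2*M 1 0*M 2 3*M 3 1*M 4 5*M 5 4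
      + M 0 2*M 1 0*M 2 3*M 3 4*M 4 1*M 5 5
      - M 0 2*M 1 0*M 2 3*M 3 4*M 4 5*M 5 1
      - M 0 2*M 1 0*M 2 3*M 3 5*M 4 1*M 5 4
      + M 0 2*M 1 0*M 2 3*M 3 5*M 4 4*M 5 1
      + M 0 2*M 1 0*M 2 4*M 3 1*M 4 3*M 5 5
      - M 0 2*M 1 0*M 2 4*M 3 1*M 4 5*M 5 3
      - M 0 2*M 1 0*M 2 4*M 3 3*M 4 1*M 5 5
      + M 0 2*M 1 0*M 2 4*M 3 3*M 4 5*M 5 1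
      + M 0 2*M 1 0*M 2 4*M 3 5*M 4 1*M 5 3
      - M 0 2*M 1 0*M 2 4*M 3 5*M 4 3*M 5 1
      - M 0 2*M 1 0*M 2 5*M 3 1*M 4 3*M 5 4
      + M 0 2*M 1 0*M 2 5*M 3 1*M 4 4*M 5 3
      + M 0 2*M 1 0*M 2 5*M 3 3*M 4 1*M 5 4
      - M 0 2*M 1 0*M 2 5*M 3 3*M 4 4*M 5 1
      - M 0 2*M 1 0*M 2 5*M 3 4*M 4 1*M 5 3
      + M 0 2*M 1 0*M 2 5*M 3 4*M 4 3*M 5 1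
      - M 0 2*M 1 1*M 2 0*M 3 3*M 4 4*M 5 5
      + M 0 2*M 1 1*M 2 0*M 3 3*M 4 5*M 5 4
      + M 0 2*M 1 1*M 2 0*M 3 4*M 4 3*M 5 5
      - M 0 2*M 1 1*M 2 0*M 3 4*M 4 5*M 5 3
      - M 0 2*M 1 1*M 2 0*M 3 5*M 4 3*M 5 4
      + M 0 2*M 1 1*M 2 0*M 3 5*M 4 4*M 5 3
      + M 0 2*M 1 1*M 2 3*M 3 0*M 4 4*M 5 5
      - M 0 2*M 1 1*M 2 3*M 3 0*M 4 5*M 5 4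
      - M 0 2*M 1 1*M 2 3*M 3 4*M 4 0*M 5 5
      + M 0 2*M 1 1*M 2 3*M 3 4*M 4 5*M 5 0
      + M 0 2*M 1 1*M 2 3*M 3 5*M 4 0*M 5 4
      - M 0 2*M 1 1*M 2 3*M 3 5*M 4 4*M 5 0
      - M 0 2*M 1 1*M 2 4*M 3 0*M 4 3*M 5 5
      + M 0 2*M 1 1*M 2 4*M 3 0*M 4 5*M 5 3
      + M 0 2*M 1 1*M 2 4*M 3 3*M 4 0*M 5 5
      - M 0 2*M 1 1*M 2 4*M 3 3*M 4 5*M 5 0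
      - M 0 2*M 1 1*M 2 4*M 3 5*M 4 0*M 5 3
      + M 0 2*M 1 1*M 2 4*M 3 5*M 4 3*M 5 0
      + M 0 2*M 1 1*M 2 5*M 3 0*M 4 3*M 5 4
      - M 0 2*M 1 1*M 2 5*M 3 0*M 4 4*M 5 3
      - M 0 2*M 1 1*M 2 5*M 3 3*M 4 0*M 5 4
      + M 0 2*M 1 1*M 2 5*M 3 3*M 4 4*M 5 0
      + M 0 2*M 1 1*M 2 5*M 3 4*M 4 0*M 5 3
      - M 0 2*M 1 1*M 2 5*M 3 4*M 4 3*M 5 0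
      + M 0 2*M 1 3*M 2 0*M 3 1*M 4 4*M 5 5
      - M 0 2*M 1 3*M 2 0*M 3 1*M 4 5*M 5 4
      - M 0 2*M 1 3*M 2 0*M 3 4*M 4 1*M 5 5
      + M 0 2*M 1 3*M 2 0*M 3 4*M 4 5*M 5 1
      + M 0 2*M 1 3*M 2 0*M 3 5*M 4 1*M 5 4
      - M 0 2*M 1 3*M 2 0*M 3 5*M 4 4*M 5 1
      - M 0 2*M 1 3*M 2 1*M 3 0*M 4 4*M 5 5
      + M 0 2*M 1 3*M 2 1*M 3 0*M 4 5*M 5 4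
      + M 0 2*M 1 3*M 2 1*M 3 4*M 4 0*M 5 5
      - M 0 2*M 1 3*M 2 1*M 3 4*M 4 5*M 5 0
      - M 0 2*M 1 3*M 2 1*M 3 5*M 4 0*M 5 4
      + M 0 2*M 1 3*M 2 1*M 3 5*M 4 4*M 5 0
      + M 0 2*M 1 3*M 2 4*M 3 0*M 4 1*M 5 5
      - M 0 2*M 1 3*M 2 4*M 3 0*M 4 5*M 5 1
      - M 0 2*M 1 3*M 2 4*M 3 1*M 4 0*M 5 5
      + M 0 2*M 1 3*M 2 4*M 3 1*M 4 5*M 5 0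
      + M 0 2*M 1 3*M 2 4*M 3 5*M 4 0*M 5 1
      - M 0 2*M 1 3*M 2 4*M 3 5*M 4 1*M 5 0
      - M 0 2*M 1 3*M 2 5*M 3 0*M 4 1*M 5 4
      + M 0 2*M 1 3*M 2 5*M 3 0*M 4 4*M 5 1
      + M 0 2*M 1 3*M 2 5*M 3 1*M 4 0*M 5 4
      - M 0 2*M 1 3*M 2 5*M 3 1*M 4 4*M 5 0
      - M 0 2*M 1 3*M 2 5*M 3 4*M 4 0*M 5 1
      + M 0 2*M 1 3*M 2 5*M 3 4*M 4 1*M 5 0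
      - M 0 2*M 1 4*M 2 0*M 3 1*M 4 3*M 5 5
      + M 0 2*M 1 4*M 2 0*M 3 1*M 4 5*M 5 3
      + M 0 2*M 1 4*M 2 0*M 3 3*M 4 1*M 5 5
      - M 0 2*M 1 4*M 2 0*M 3 3*M 4 5*M 5 1
      - M 0 2*M 1 4*M 2 0*M 3 5*M 4 1*M 5 3
      + M 0 2*M 1 4*M 2 0*M 3 5*M 4 3*M 5 1
      + M 0 2*M 1 4*M 2 1*M 3 0*M 4 3*M 5 5
      - M 0 2*M 1 4*M 2 1*M 3 0*M 4 5*M 5 3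
      - M 0 2*M 1 4*M 2 1*M 3 3*M 4 0*M 5 5
      + M 0 2*M 1 4*M 2 1*M 3 3*M 4 5*M 5 0
      + M 0 2*M 1 4*M 2 1*M 3 5*M 4 0*M 5 3
      - M 0 2*M 1 4*M 2 1*M 3 5*M 4 3*M 5 0
      - M 0 2*M 1 4*M 2 3*M 3 0*M 4 1*M 5 5
      + M 0 2*M 1 4*M 2 3*M 3 0*M 4 5*M 5 1
      + M 0 2*M 1 4*M 2 3*M 3 1*M 4 0*M 5 5
      - M 0 2*M 1 4*M 2 3*M 3 1*M 4 5*M 5 0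
      - M 0 2*M 1 4*M 2 3*M 3 5*M 4 0*M 5 1
      + M 0 2*M 1 4*M 2 3*M 3 5*M 4 1*M 5 0
      + M 0 2*M 1 4*M 2 5*M 3 0*M 4 1*M 5 3
      - M 0 2*M 1 4*M 2 5*M 3 0*M 4 3*M 5 1
      - M 0 2*M 1 4*M 2 5*M 3 1*M 4 0*M 5 3
      + M 0 2*M 1 4*M 2 5*M 3 1*M 4 3*M 5 0
      + M 0 2*M 1 4*M 2 5*M 3 3*M 4 0*M 5 1
      - M 0 2*M 1 4*M 2 5*M 3 3*M 4 1*M 5 0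
      + M 0 2*M 1 5*M 2 0*M 3 1*M 4 3*M 5 4
      - M 0 2*M 1 5*M 2 0*M 3 1*M 4 4*M 5 3
      - M 0 2*M 1 5*M 2 0*M 3 3*M 4 1*M 5 4
      + M 0 2*M 1 5*M 2 0*M 3 3*M 4 4*M 5 1
      + M 0 2*M 1 5*M 2 0*M 3 4*M 4 1*M 5 3
      - M 0 2*M 1 5*M 2 0*M 3 4*M 4 3*M 5 1
      - M 0 2*M 1 5*M 2 1*M 3 0*M 4 3*M 5 4
      + M 0 2*M 1 5*M 2 1*M 3 0*M 4 4*M 5 3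
      + M 0 2*M 1 5*M 2 1*M 3 3*M 4 0*M 5 4
      - M 0 2*M 1 5*M 2 1*M 3 3*M 4 4*M 5 0
      - M 0 2*M 1 5*M 2 1*M 3 4*M 4 0*M 5 3
      + M 0 2*M 1 5*M 2 1*M 3 4*M 4 3*M 5 0
      + M 0 2*M 1 5*M 2 3*M 3 0*M 4 1*M 5 4
      - M 0 2*M 1 5*M 2 3*M 3 0*M 4 4*M 5 1
      - M 0 2*M 1 5*M 2 3*M 3 1*M 4 0*M 5 4
      + M 0 2*M 1 5*M 2 3*M 3 1*M 4 4*M 5 0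
      + M 0 2*M 1 5*M 2 3*M 3 4*M 4 0*M 5 1
      - M 0 2*M 1 5*M 2 3*M 3 4*M 4 1*M 5 0
      - M 0 2*M 1 5*M 2 4*M 3 0*M 4 1*M 5 3
      + M 0 2*M 1 5*M 2 4*M 3 0*M 4 3*M 5 1
      + M 0 2*M 1 5*M 2 4*M 3 1*M 4 0*M 5 3
      - M 0 2*M 1 5*M 2 4*M 3 1*M 4 3*M 5 0
      - M 0 2*M 1 5*M 2 4*M 3 3*M 4 0*M 5 1
      + M 0 2*M 1 5*M 2 4*M 3 3*M 4 1*M 5 0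
      - M 0 3*M 1 0*M 2 1*M 3 2*M 4 4*M 5 5
      + M 0 3*M 1 0*M 2 1*M 3 2*M 4 5*M 5 4
      + M 0 3*M 1 0*M 2 1*M 3 4*M 4 2*M 5 5
      - M 0 3*M 1 0*M 2 1*M 3 4*M 4 5*M 5 2
      - M 0 3*M 1 0*M 2 1*M 3 5*M 4 2*M 5 4
      + M 0 3*M 1 0*M 2 1*M 3 5*M 4 4*M 5 2
      + M 0 3*M 1 0*M 2 2*M 3 1*M 4 4*M 5 5
      - M 0 3*M 1 0*M 2 2*M 3 1*M 4 5*M 5 4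
      - M 0 3*M 1 0*M 2 2*M 3 4*M 4 1*M 5 5
      + M 0 3*M 1 0*M 2 2*M 3 4*M 4 5*M 5 1
      + M 0 3*M 1 0*M 2 2*M 3 5*M 4 1*M 5 4
      - M 0 3*M 1 0*M 2 2*M 3 5*M 4 4*M 5 1
      - M 0 3*M 1 0*M 2 4*M 3 1*M 4 2*M 5 5
      + M 0 3*M 1 0*M 2 4*M 3 1*M 4 5*M 5 2
      + M 0 3*M 1 0*M 2 4*M 3 2*M 4 1*M 5 5
      - M 0 3*M 1 0*M 2 4*M 3 2*M 4 5*M 5 1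
      - M 0 3*M 1 0*M 2 4*M 3 5*M 4 1*M 5 2
      + M 0 3*M 1 0*M 2 4*M 3 5*M 4 2*M 5 1
      + M 0 3*M 1 0*M 2 5*M 3 1*M 4 2*M 5 4
      - M 0 3*M 1 0*M 2 5*M 3 1*M 4 4*M 5 2
      - M 0 3*M 1 0*M 2 5*M 3 2*M 4 1*M 5 4
      + M 0 3*M 1 0*M 2 5*M 3 2*M 4 4*M 5 1
      + M 0 3*M 1 0*M 2 5*M 3 4*M 4 1*M 5 2
      - M 0 3*M 1 0*M 2 5*M 3 4*M 4 2*M 5 1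
      + M 0 3*M 1 1*M 2 0*M 3 2*M 4 4*M 5 5
      - M 0 3*M 1 1*M 2 0*M 3 2*M 4 5*M 5 4
      - M 0 3*M 1 1*M 2 0*M 3 4*M 4 2*M 5 5
      + M 0 3*M 1 1*M 2 0*M 3 4*M 4 5*M 5 2
      + M 0 3*M 1 1*M 2 0*M 3 5*M 4 2*M 5 4
      - M 0 3*M 1 1*M 2 0*M 3 5*M 4 4*M 5 2
      - M 0 3*M 1 1*M 2 2*M 3 0*M 4 4*M 5 5
      + M 0 3*M 1 1*M 2 2*M 3 0*M 4 5*M 5 4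
      + M 0 3*M 1 1*M 2 2*M 3 4*M 4 0*M 5 5
      - M 0 3*M 1 1*M 2 2*M 3 4*M 4 5*M 5 0
      - M 0 3*M 1 1*M 2 2*M 3 5*M 4 0*M 5 4
      + M 0 3*M 1 1*M 2 2*M 3 5*M 4 4*M 5 0
      + M 0 3*M 1 1*M 2 4*M 3 0*M 4 2*M 5 5
      - M 0 3*M 1 1*M 2 4*M 3 0*M 4 5*M 5 2
      - M 0 3*M 1 1*M 2 4*M 3 2*M 4 0*M 5 5
      + M 0 3*M 1 1*M 2 4*M 3 2*M 4 5*M 5 0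
      + M 0 3*M 1 1*M 2 4*M 3 5*M 4 0*M 5 2
      - M 0 3*M 1 1*M 2 4*M 3 5*M 4 2*M 5 0
      - M 0 3*M 1 1*M 2 5*M 3 0*M 4 2*M 5 4
      + M 0 3*M 1 1*M 2 5*M 3 0*M 4 4*M 5 2
      + M 0 3*M 1 1*M 2 5*M 3 2*M 4 0*M 5 4
      - M 0 3*M 1 1*M 2 5*M 3 2*M 4 4*M 5 0
      - M 0 3*M 1 1*M 2 5*M 3 4*M 4 0*M 5 2
      + M 0 3*M 1 1*M 2 5*M 3 4*M 4 2*M 5 0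
      - M 0 3*M 1 2*M 2 0*M 3 1*M 4 4*M 5 5
      + M 0 3*M 1 2*M 2 0*M 3 1*M 4 5*M 5 4
      + M 0 3*M 1 2*M 2 0*M 3 4*M 4 1*M 5 5
      - M 0 3*M 1 2*M 2 0*M 3 4*M 4 5*M 5 1
      - M 0 3*M 1 2*M 2 0*M 3 5*M 4 1*M 5 4
      + M 0 3*M 1 2*M 2 0*M 3 5*M 4 4*M 5 1
      + M 0 3*M 1 2*M 2 1*M 3 0*M 4 4*M 5 5
      - M 0 3*M 1 2*M 2 1*M 3 0*M 4 5*M 5 4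
      - M 0 3*M 1 2*M 2 1*M 3 4*M 4 0*M 5 5
      + M 0 3*M 1 2*M 2 1*M 3 4*M 4 5*M 5 0
      + M 0 3*M 1 2*M 2 1*M 3 5*M 4 0*M 5 4
      - M 0 3*M 1 2*M 2 1*M 3 5*M 4 4*M 5 0
      - M 0 3*M 1 2*M 2 4*M 3 0*M 4 1*M 5 5
      + M 0 3*M 1 2*M 2 4*M 3 0*M 4 5*M 5 1
      + M 0 3*M 1 2*M 2 4*M 3 1*M 4 0*M 5 5
      - M 0 3*M 1 2*M 2 4*M 3 1*M 4 5*M 5 0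
      - M 0 3*M 1 2*M 2 4*M 3 5*M 4 0*M 5 1
      + M 0 3*M 1 2*M 2 4*M 3 5*M 4 1*M 5 0
      + M 0 3*M 1 2*M 2 5*M 3 0*M 4 1*M 5 4
      - M 0 3*M 1 2*M 2 5*M 3 0*M 4 4*M 5 1
      - M 0 3*M 1 2*M 2 5*M 3 1*M 4 0*M 5 4
      + M 0 3*M 1 2*M 2 5*M 3 1*M 4 4*M 5 0
      + M 0 3*M 1 2*M 2 5*M 3 4*M 4 0*M 5 1
      - M 0 3*M 1 2*M 2 5*M 3 4*M 4 1*M 5 0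
      + M 0 3*M 1 4*M 2 0*M 3 1*M 4 2*M 5 5
      - M 0 3*M 1 4*M 2 0*M 3 1*M 4 5*M 5 2
      - M 0 3*M 1 4*M 2 0*M 3 2*M 4 1*M 5 5
      + M 0 3*M 1 4*M 2 0*M 3 2*M 4 5*M 5 1
      + M 0 3*M 1 4*M 2 0*M 3 5*M 4 1*M 5 2
      - M 0 3*M 1 4*M 2 0*M 3 5*M 4 2*M 5 1
      - M 0 3*M 1 4*M 2 1*M 3 0*M 4 2*M 5 5
      + M 0 3*M 1 4*M 2 1*M 3 0*M 4 5*M 5 2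
      + M 0 3*M 1 4*M 2 1*M 3 2*M 4 0*M 5 5
      - M 0 3*M 1 4*M 2 1*M 3 2*M 4 5*M 5 0
      - M 0 3*M 1 4*M 2 1*M 3 5*M 4 0*M 5 2
      + M 0 3*M 1 4*M 2 1*M 3 5*M 4 2*M 5 0
      + M 0 3*M 1 4*M 2 2*M 3 0*M 4 1*M 5 5
      - M 0 3*M 1 4*M 2 2*M 3 0*M 4 5*M 5 1
      - M 0 3*M 1 4*M 2 2*M 3 1*M 4 0*M 5 5
      + M 0 3*M 1 4*M 2 2*M 3 1*M 4 5*M 5 0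
      + M 0 3*M 1 4*M 2 2*M 3 5*M 4 0*M 5 1
      - M 0 3*M 1 4*M 2 2*M 3 5*M 4 1*M 5 0
      - M 0 3*M 1 4*M 2 5*M 3 0*M 4 1*M 5 2
      + M 0 3*M 1 4*M 2 5*M 3 0*M 4 2*M 5 1
      + M 0 3*M 1 4*M 2 5*M 3 1*M 4 0*M 5 2
      - M 0 3*M 1 4*M 2 5*M 3 1*M 4 2*M 5 0
      - M 0 3*M 1 4*M 2 5*M 3 2*M 4 0*M 5 1
      + M 0 3*M 1 4*M 2 5*M 3 2*M 4 1*M 5 0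
      - M 0 3*M 1 5*M 2 0*M 3 1*M 4 2*M 5 4
      + M 0 3*M 1 5*M 2 0*M 3 1*M 4 4*M 5 2
      + M 0 3*M 1 5*M 2 0*M 3 2*M 4 1*M 5 4
      - M 0 3*M 1 5*M 2 0*M 3 2*M 4 4*M 5 1
      - M 0 3*M 1 5*M 2 0*M 3 4*M 4 1*M 5 2
      + M 0 3*M 1 5*M 2 0*M 3 4*M 4 2*M 5 1
      + M 0 3*M 1 5*M 2 1*M 3 0*M 4 2*M 5 4
      - M 0 3*M 1 5*M 2 1*M 3 0*M 4 4*M 5 2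
      - M 0 3*M 1 5*M 2 1*M 3 2*M 4 0*M 5 4
      + M 0 3*M 1 5*M 2 1*M 3 2*M 4 4*M 5 0
      + M 0 3*M 1 5*M 2 1*M 3 4*M 4 0*M 5 2
      - M 0 3*M 1 5*M 2 1*M 3 4*M 4 2*M 5 0
      - M 0 3*M 1 5*M 2 2*M 3 0*M 4 1*M 5 4
      + M 0 3*M 1 5*M 2 2*M 3 0*M 4 4*M 5 1
      + M 0 3*M 1 5*M 2 2*M 3 1*M 4 0*M 5 4
      - M 0 3*M 1 5*M 2 2*M 3 1*M 4 4*M 5 0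
      - M 0 3*M 1 5*M 2 2*M 3 4*M 4 0*M 5 1
      + M 0 3*M 1 5*M 2 2*M 3 4*M 4 1*M 5 0
      + M 0 3*M 1 5*M 2 4*M 3 0*M 4 1*M 5 2
      - M 0 3*M 1 5*M 2 4*M 3 0*M 4 2*M 5 1
      - M 0 3*M 1 5*M 2 4*M 3 1*M 4 0*M 5 2
      + M 0 3*M 1 5*M 2 4*M 3 1*M 4 2*M 5 0
      + M 0 3*M 1 5*M 2 4*M 3 2*M 4 0*M 5 1
      - M 0 3*M 1 5*M 2 4*M 3 2*M 4 1*M 5 0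
      + M 0 4*M 1 0*M 2 1*M 3 2*M 4 3*M 5 5
      - M 0 4*M 1 0*M 2 1*M 3 2*M 4 5*M 5 3
      - M 0 4*M 1 0*M 2 1*M 3 3*M 4 2*M 5 5
      + M 0 4*M 1 0*M 2 1*M 3 3*M 4 5*M 5 2
      + M 0 4*M 1 0*M 2 1*M 3 5*M 4 2*M 5 3
      - M 0 4*M 1 0*M 2 1*M 3 5*M 4 3*M 5 2
      - M 0 4*M 1 0*M 2 2*M 3 1*M 4 3*M 5 5
      + M 0 4*M 1 0*M 2 2*M 3 1*M 4 5*M 5 3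
      + M 0 4*M 1 0*M 2 2*M 3 3*M 4 1*M 5 5
      - M 0 4*M 1 0*M 2 2*M 3 3*M 4 5*M 5 1
      - M 0 4*M 1 0*M 2 2*M 3 5*M 4 1*M 5 3
      + M 0 4*M 1 0*M 2 2*M 3 5*M 4 3*M 5 1
      + M 0 4*M 1 0*M 2 3*M 3 1*M 4 2*M 5 5
      - M 0 4*M 1 0*M 2 3*M 3 1*M 4 5*M 5 2
      - M 0 4*M 1 0*M 2 3*M 3 2*M 4 1*M 5 5
      + M 0 4*M 1 0*M 2 3*M 3 2*M 4 5*M 5 1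
      + M 0 4*M 1 0*M 2 3*M 3 5*M 4 1*M 5 2
      - M 0 4*M 1 0*M 2 3*M 3 5*M 4 2*M 5 1
      - M 0 4*M 1 0*M 2 5*M 3 1*M 4 2*M 5 3
      + M 0 4*M 1 0*M 2 5*M 3 1*M 4 3*M 5 2
      + M 0 4*M 1 0*M 2 5*M 3 2*M 4 1*M 5 3
      - M 0 4*M 1 0*M 2 5*M 3 2*M 4 3*M 5 1
      - M 0 4*M 1 0*M 2 5*M 3 3*M 4 1*M 5 2
      + M 0 4*M 1 0*M 2 5*M 3 3*M 4 2*M 5 1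
      - M 0 4*M 1 1*M 2 0*M 3 2*M 4 3*M 5 5
      + M 0 4*M 1 1*M 2 0*M 3 2*M 4 5*M 5 3
      + M 0 4*M 1 1*M 2 0*M 3 3*M 4 2*M 5 5
      - M 0 4*M 1 1*M 2 0*M 3 3*M 4 5*M 5 2
      - M 0 4*M 1 1*M 2 0*M 3 5*M 4 2*M 5 3
      + M 0 4*M 1 1*M 2 0*M 3 5*M 4 3*M 5 2
      + M 0 4*M 1 1*M 2 2*M 3 0*M 4 3*M 5 5
      - M 0 4*M 1 1*M 2 2*M 3 0*M 4 5*M 5 3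
      - M 0 4*M 1 1*M 2 2*M 3 3*M 4 0*M 5 5
      + M 0 4*M 1 1*M 2 2*M 3 3*M 4 5*M 5 0
      + M 0 4*M 1 1*M 2 2*M 3 5*M 4 0*M 5 3
      - M 0 4*M 1 1*M 2 2*M 3 5*M 4 3*M 5 0
      - M 0 4*M 1 1*M 2 3*M 3 0*M 4 2*M 5 5
      + M 0 4*M 1 1*M 2 3*M 3 0*M 4 5*M 5 2
      + M 0 4*M 1 1*M 2 3*M 3 2*M 4 0*M 5 5
      - M 0 4*M 1 1*M 2 3*M 3 2*M 4 5*M 5 0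
      - M 0 4*M 1 1*M 2 3*M 3 5*M 4 0*M 5 2
      + M 0 4*M 1 1*M 2 3*M 3 5*M 4 2*M 5 0
      + M 0 4*M 1 1*M 2 5*M 3 0*M 4 2*M 5 3
      - M 0 4*M 1 1*M 2 5*M 3 0*M 4 3*M 5 2
      - M 0 4*M 1 1*M 2 5*M 3 2*M 4 0*M 5 3
      + M 0 4*M 1 1*M 2 5*M 3 2*M 4 3*M 5 0
      + M 0 4*M 1 1*M 2 5*M 3 3*M 4 0*M 5 2
      - M 0 4*M 1 1*M 2 5*M 3 3*M 4 2*M 5 0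
      + M 0 4*M 1 2*M 2 0*M 3 1*M 4 3*M 5 5
      - M 0 4*M 1 2*M 2 0*M 3 1*M 4 5*M 5 3
      - M 0 4*M 1 2*M 2 0*M 3 3*M 4 1*M 5 5
      + M 0 4*M 1 2*M 2 0*M 3 3*M 4 5*M 5 1
      + M 0 4*M 1 2*M 2 0*M 3 5*M 4 1*M 5 3
      - M 0 4*M 1 2*M 2 0*M 3 5*M 4 3*M 5 1
      - M 0 4*M 1 2*M 2 1*M 3 0*M 4 3*M 5 5
      + M 0 4*M 1 2*M 2 1*M 3 0*M 4 5*M 5 3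
      + M 0 4*M 1 2*M 2 1*M 3 3*M 4 0*M 5 5
      - M 0 4*M 1 2*M 2 1*M 3 3*M 4 5*M 5 0
      - M 0 4*M 1 2*M 2 1*M 3 5*M 4 0*M 5 3
      + M 0 4*M 1 2*M 2 1*M 3 5*M 4 3*M 5 0
      + M 0 4*M 1 2*M 2 3*M 3 0*M 4 1*M 5 5
      - M 0 4*M 1 2*M 2 3*M 3 0*M 4 5*M 5 1
      - M 0 4*M 1 2*M 2 3*M 3 1*M 4 0*M 5 5
      + M 0 4*M 1 2*M 2 3*M 3 1*M 4 5*M 5 0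
      + M 0 4*M 1 2*M 2 3*M 3 5*M 4 0*M 5 1
      - M 0 4*M 1 2*M 2 3*M 3 5*M 4 1*M 5 0
      - M 0 4*M 1 2*M 2 5*M 3 0*M 4 1*M 5 3
      + M 0 4*M 1 2*M 2 5*M 3 0*M 4 3*M 5 1
      + M 0 4*M 1 2*M 2 5*M 3 1*M 4 0*M 5 3
      - M 0 4*M 1 2*M 2 5*M 3 1*M 4 3*M 5 0
      - M 0 4*M 1 2*M 2 5*M 3 3*M 4 0*M 5 1
      + M 0 4*M 1 2*M 2 5*M 3 3*M 4 1*M 5 0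
      - M 0 4*M 1 3*M 2 0*M 3 1*M 4 2*M 5 5
      + M 0 4*M 1 3*M 2 0*M 3 1*M 4 5*M 5 2
      + M 0 4*M 1 3*M 2 0*M 3 2*M 4 1*M 5 5
      - M 0 4*M 1 3*M 2 0*M 3 2*M 4 5*M 5 1
      - M 0 4*M 1 3*M 2 0*M 3 5*M 4 1*M 5 2
      + M 0 4*M 1 3*M 2 0*M 3 5*M 4 2*M 5 1
      + M 0 4*M 1 3*M 2 1*M 3 0*M 4 2*M 5 5
      - M 0 4*M 1 3*M 2 1*M 3 0*M 4 5*M 5 2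
      - M 0 4*M 1 3*M 2 1*M 3 2*M 4 0*M 5 5
      + M 0 4*M 1 3*M 2 1*M 3 2*M 4 5*M 5 0
      + M 0 4*M 1 3*M 2 1*M 3 5*M 4 0*M 5 2
      - M 0 4*M 1 3*M 2 1*M 3 5*M 4 2*M 5 0
      - M 0 4*M 1 3*M 2 2*M 3 0*M 4 1*M 5 5
      + M 0 4*M 1 3*M 2 2*M 3 0*M 4 5*M 5 1
      + M 0 4*M 1 3*M 2 2*M 3 1*M 4 0*M 5 5
      - M 0 4*M 1 3*M 2 2*M 3 1*M 4 5*M 5 0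
      - M 0 4*M 1 3*M 2 2*M 3 5*M 4 0*M 5 1
      + M 0 4*M 1 3*M 2 2*M 3 5*M 4 1*M 5 0
      + M 0 4*M 1 3*M 2 5*M 3 0*M 4 1*M 5 2
      - M 0 4*M 1 3*M 2 5*M 3 0*M 4 2*M 5 1
      - M 0 4*M 1 3*M 2 5*M 3 1*M 4 0*M 5 2
      + M 0 4*M 1 3*M 2 5*M 3 1*M 4 2*M 5 0
      + M 0 4*M 1 3*M 2 5*M 3 2*M 4 0*M 5 1
      - M 0 4*M 1 3*M 2 5*M 3 2*M 4 1*M 5 0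
      + M 0 4*M 1 5*M 2 0*M 3 1*M 4 2*M 5 3
      - M 0 4*M 1 5*M 2 0*M 3 1*M 4 3*M 5 2
      - M 0 4*M 1 5*M 2 0*M 3 2*M 4 1*M 5 3
      + M 0 4*M 1 5*M 2 0*M 3 2*M 4 3*M 5 1
      + M 0 4*M 1 5*M 2 0*M 3 3*M 4 1*M 5 2
      - M 0 4*M 1 5*M 2 0*M 3 3*M 4 2*M 5 1
      - M 0 4*M 1 5*M 2 1*M 3 0*M 4 2*M 5 3
      + M 0 4*M 1 5*M 2 1*M 3 0*M 4 3*M 5 2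
      + M 0 4*M 1 5*M 2 1*M 3 2*M 4 0*M 5 3
      - M 0 4*M 1 5*M 2 1*M 3 2*M 4 3*M 5 0
      - M 0 4*M 1 5*M 2 1*M 3 3*M 4 0*M 5 2
      + M 0 4*M 1 5*M 2 1*M 3 3*M 4 2*M 5 0
      + M 0 4*M 1 5*M 2 2*M 3 0*M 4 1*M 5 3
      - M 0 4*M 1 5*M 2 2*M 3 0*M 4 3*M 5 1
      - M 0 4*M 1 5*M 2 2*M 3 1*M 4 0*M 5 3
      + M 0 4*M 1 5*M 2 2*M 3 1*M 4 3*M 5 0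
      + M 0 4*M 1 5*M 2 2*M 3 3*M 4 0*M 5 1
      - M 0 4*M 1 5*M 2 2*M 3 3*M 4 1*M 5 0
      - M 0 4*M 1 5*M 2 3*M 3 0*M 4 1*M 5 2
      + M 0 4*M 1 5*M 2 3*M 3 0*M 4 2*M 5 1
      + M 0 4*M 1 5*M 2 3*M 3 1*M 4 0*M 5 2
      - M 0 4*M 1 5*M 2 3*M 3 1*M 4 2*M 5 0
      - M 0 4*M 1 5*M 2 3*M 3 2*M 4 0*M 5 1
      + M 0 4*M 1 5*M 2 3*M 3 2*M 4 1*M 5 0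
      - M 0 5*M 1 0*M 2 1*M 3 2*M 4 3*M 5 4
      + M 0 5*M 1 0*M 2 1*M 3 2*M 4 4*M 5 3
      + M 0 5*M 1 0*M 2 1*M 3 3*M 4 2*M 5 4
      - M 0 5*M 1 0*M 2 1*M 3 3*M 4 4*M 5 2
      - M 0 5*M 1 0*M 2 1*M 3 4*M 4 2*M 5 3
      + M 0 5*M 1 0*M 2 1*M 3 4*M 4 3*M 5 2
      + M 0 5*M 1 0*M 2 2*M 3 1*M 4 3*M 5 4
      - M 0 5*M 1 0*M 2 2*M 3 1*M 4 4*M 5 3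
      - M 0 5*M 1 0*M 2 2*M 3 3*M 4 1*M 5 4
      + M 0 5*M 1 0*M 2 2*M 3 3*M 4 4*M 5 1
      + M 0 5*M 1 0*M 2 2*M 3 4*M 4 1*M 5 3
      - M 0 5*M 1 0*M 2 2*M 3 4*M 4 3*M 5 1
      - M 0 5*M 1 0*M 2 3*M 3 1*M 4 2*M 5 4
      + M 0 5*M 1 0*M 2 3*M 3 1*M 4 4*M 5 2
      + M 0 5*M 1 0*M 2 3*M 3 2*M 4 1*M 5 4
      - M 0 5*M 1 0*M 2 3*M 3 2*M 4 4*M 5 1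
      - M 0 5*M 1 0*M 2 3*M 3 4*M 4 1*M 5 2
      + M 0 5*M 1 0*M 2 3*M 3 4*M 4 2*M 5 1
      + M 0 5*M 1 0*M 2 4*M 3 1*M 4 2*M 5 3
      - M 0 5*M 1 0*M 2 4*M 3 1*M 4 3*M 5 2
      - M 0 5*M 1 0*M 2 4*M 3 2*M 4 1*M 5 3
      + M 0 5*M 1 0*M 2 4*M 3 2*M 4 3*M 5 1
      + M 0 5*M 1 0*M 2 4*M 3 3*M 4 1*M 5 2
      - M 0 5*M 1 0*M 2 4*M 3 3*M 4 2*M 5 1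
      + M 0 5*M 1 1*M 2 0*M 3 2*M 4 3*M 5 4
      - M 0 5*M 1 1*M 2 0*M 3 2*M 4 4*M 5 3
      - M 0 5*M 1 1*M 2 0*M 3 3*M 4 2*M 5 4
      + M 0 5*M 1 1*M 2 0*M 3 3*M 4 4*M 5 2
      + M 0 5*M 1 1*M 2 0*M 3 4*M 4 2*M 5 3
      - M 0 5*M 1 1*M 2 0*M 3 4*M 4 3*M 5 2
      - M 0 5*M 1 1*M 2 2*M 3 0*M 4 3*M 5 4
      + M 0 5*M 1 1*M 2 2*M 3 0*M 4 4*M 5 3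
      + M 0 5*M 1 1*M 2 2*M 3 3*M 4 0*M 5 4
      - M 0 5*M 1 1*M 2 2*M 3 3*M 4 4*M 5 0
      - M 0 5*M 1 1*M 2 2*M 3 4*M 4 0*M 5 3
      + M 0 5*M 1 1*M 2 2*M 3 4*M 4 3*M 5 0
      + M 0 5*M 1 1*M 2 3*M 3 0*M 4 2*M 5 4
      - M 0 5*M 1 1*M 2 3*M 3 0*M 4 4*M 5 2
      - M 0 5*M 1 1*M 2 3*M 3 2*M 4 0*M 5 4
      + M 0 5*M 1 1*M 2 3*M 3 2*M 4 4*M 5 0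
      + M 0 5*M 1 1*M 2 3*M 3 4*M 4 0*M 5 2
      - M 0 5*M 1 1*M 2 3*M 3 4*M 4 2*M 5 0
      - M 0 5*M 1 1*M 2 4*M 3 0*M 4 2*M 5 3
      + M 0 5*M 1 1*M 2 4*M 3 0*M 4 3*M 5 2
      + M 0 5*M 1 1*M 2 4*M 3 2*M 4 0*M 5 3
      - M 0 5*M 1 1*M 2 4*M 3 2*M 4 3*M 5 0
      - M 0 5*M 1 1*M 2 4*M 3 3*M 4 0*M 5 2
      + M 0 5*M 1 1*M 2 4*M 3 3*M 4 2*M 5 0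
      - M 0 5*M 1 2*M 2 0*M 3 1*M 4 3*M 5 4
      + M 0 5*M 1 2*M 2 0*M 3 1*M 4 4*M 5 3
      + M 0 5*M 1 2*M 2 0*M 3 3*M 4 1*M 5 4
      - M 0 5*M 1 2*M 2 0*M 3 3*M 4 4*M 5 1
      - M 0 5*M 1 2*M 2 0*M 3 4*M 4 1*M 5 3
      + M 0 5*M 1 2*M 2 0*M 3 4*M 4 3*M 5 1
      + M 0 5*M 1 2*M 2 1*M 3 0*M 4 3*M 5 4
      - M 0 5*M 1 2*M 2 1*M 3 0*M 4 4*M 5 3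
      - M 0 5*M 1 2*M 2 1*M 3 3*M 4 0*M 5 4
      + M 0 5*M 1 2*M 2 1*M 3 3*M 4 4*M 5 0
      + M 0 5*M 1 2*M 2 1*M 3 4*M 4 0*M 5 3
      - M 0 5*M 1 2*M 2 1*M 3 4*M 4 3*M 5 0
      - M 0 5*M 1 2*M 2 3*M 3 0*M 4 1*M 5 4
      + M 0 5*M 1 2*M 2 3*M 3 0*M 4 4*M 5 1
      + M 0 5*M 1 2*M 2 3*M 3 1*M 4 0*M 5 4
      - M 0 5*M 1 2*M 2 3*M 3 1*M 4 4*M 5 0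
      - M 0 5*M 1 2*M 2 3*M 3 4*M 4 0*M 5 1
      + M 0 5*M 1 2*M 2 3*M 3 4*M 4 1*M 5 0
      + M 0 5*M 1 2*M 2 4*M 3 0*M 4 1*M 5 3
      - M 0 5*M 1 2*M 2 4*M 3 0*M 4 3*M 5 1
      - M 0 5*M 1 2*M 2 4*M 3 1*M 4 0*M 5 3
      + M 0 5*M 1 2*M 2 4*M 3 1*M 4 3*M 5 0
      + M 0 5*M 1 2*M 2 4*M 3 3*M 4 0*M 5 1
      - M 0 5*M 1 2*M 2 4*M 3 3*M 4 1*M 5 0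
      + M 0 5*M 1 3*M 2 0*M 3 1*M 4 2*M 5 4
      - M 0 5*M 1 3*M 2 0*M 3 1*M 4 4*M 5 2
      - M 0 5*M 1 3*M 2 0*M 3 2*M 4 1*M 5 4
      + M 0 5*M 1 3*M 2 0*M 3 2*M 4 4*M 5 1
      + M 0 5*M 1 3*M 2 0*M 3 4*M 4 1*M 5 2
      - M 0 5*M 1 3*M 2 0*M 3 4*M 4 2*M 5 1
      - M 0 5*M 1 3*M 2 1*M 3 0*M 4 2*M 5 4
      + M 0 5*M 1 3*M 2 1*M 3 0*M 4 4*M 5 2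
      + M 0 5*M 1 3*M 2 1*M 3 2*M 4 0*M 5 4
      - M 0 5*M 1 3*M 2 1*M 3 2*M 4 4*M 5 0
      - M 0 5*M 1 3*M 2 1*M 3 4*M 4 0*M 5 2
      + M 0 5*M 1 3*M 2 1*M 3 4*M 4 2*M 5 0
      + M 0 5*M 1 3*M 2 2*M 3 0*M 4 1*M 5 4
      - M 0 5*M 1 3*M 2 2*M 3 0*M 4 4*M 5 1
      - M 0 5*M 1 3*M 2 2*M 3 1*M 4 0*M 5 4
      + M 0 5*M 1 3*M 2 2*M 3 1*M 4 4*M 5 0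
      + M 0 5*M 1 3*M 2 2*M 3 4*M 4 0*M 5 1
      - M 0 5*M 1 3*M 2 2*M 3 4*M 4 1*M 5 0
      - M 0 5*M 1 3*M 2 4*M 3 0*M 4 1*M 5 2
      + M 0 5*M 1 3*M 2 4*M 3 0*M 4 2*M 5 1
      + M 0 5*M 1 3*M 2 4*M 3 1*M 4 0*M 5 2
      - M 0 5*M 1 3*M 2 4*M 3 1*M 4 2*M 5 0
      - M 0 5*M 1 3*M 2 4*M 3 2*M 4 0*M 5 1
      + M 0 5*M 1 3*M 2 4*M 3 2*M 4 1*M 5 0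
      - M 0 5*M 1 4*M 2 0*M 3 1*M 4 2*M 5 3
      + M 0 5*M 1 4*M 2 0*M 3 1*M 4 3*M 5 2
      + M 0 5*M 1 4*M 2 0*M 3 2*M 4 1*M 5 3
      - M 0 5*M 1 4*M 2 0*M 3 2*M 4 3*M 5 1
      - M 0 5*M 1 4*M 2 0*M 3 3*M 4 1*M 5 2
      + M 0 5*M 1 4*M 2 0*M 3 3*M 4 2*M 5 1
      + M 0 5*M 1 4*M 2 1*M 3 0*M 4 2*M 5 3
      - M 0 5*M 1 4*M 2 1*M 3 0*M 4 3*M 5 2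
      - M 0 5*M 1 4*M 2 1*M 3 2*M 4 0*M 5 3
      + M 0 5*M 1 4*M 2 1*M 3 2*M 4 3*M 5 0
      + M 0 5*M 1 4*M 2 1*M 3 3*M 4 0*M 5 2
      - M 0 5*M 1 4*M 2 1*M 3 3*M 4 2*M 5 0
      - M 0 5*M 1 4*M 2 2*M 3 0*M 4 1*M 5 3
      + M 0 5*M 1 4*M 2 2*M 3 0*M 4 3*M 5 1
      + M 0 5*M 1 4*M 2 2*M 3 1*M 4 0*M 5 3
      - M 0 5*M 1 4*M 2 2*M 3 1*M 4 3*M 5 0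
      - M 0 5*M 1 4*M 2 2*M 3 3*M 4 0*M 5 1
      + M 0 5*M 1 4*M 2 2*M 3 3*M 4 1*M 5 0
      + M 0 5*M 1 4*M 2 3*M 3 0*M 4 1*M 5 2
      - M 0 5*M 1 4*M 2 3*M 3 0*M 4 2*M 5 1
      - M 0 5*M 1 4*M 2 3*M 3 1*M 4 0*M 5 2
      + M 0 5*M 1 4*M 2 3*M 3 1*M 4 2*M 5 0
      + M 0 5*M 1 4*M 2 3*M 3 2*M 4 0*M 5 1
      - M 0 5*M 1 4*M 2 3*M 3 2*M 4 1*M 5 0 := by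
  rw [Matrix.det_succ_row_zero, Fin.sum_univ_six]
  simp only [det_fin_5x, Matrix.submatrix_apply,
    show Fin.succ (0:Fin 5) = (1:Fin 6) from rfl,
    show Fin.succ (1:Fin 5) = (2:Fin 6) from rfl,
    show Fin.succ (2:Fin 5) = (3:Fin 6) from rfl,
    show Fin.succ (3:Fin 5) = (4:Fin 6) from rfl,
    show Fin.succ (4:Fin 5) = (5:Fin 6) from rfl,
    show Fin.succAbove (0:Fin 6) (0:Fin 5) = (1:Fin 6) from rfl,
    show Fin.succAbove (0:Fin 6) (1:Fin 5) = (2:Fin 6) from rfl,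
    show Fin.succAbove (0:Fin 6) (2:Fin 5) = (3:Fin 6) from rfl,
    show Fin.succAbove (0:Fin 6) (3:Fin 5) = (4:Fin 6) from rfl,
    show Fin.succAbove (0:Fin 6) (4:Fin 5) = (5:Fin 6) from rfl,
    show Fin.succAbove (1:Fin 6) (0:Fin 5) = (0:Fin 6) from rfl,
    show Fin.succAbove (1:Fin 6) (1:Fin 5) = (2:Fin 6) from rfl,
    show Fin.succAbove (1:Fin 6) (2:Fin 5) = (3:Fin 6) from rfl,
    show Fin.succAbove (1:Fin 6) (3:Fin 5) = (4:Fin 6) from rfl,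
    show Fin.succAbove (1:Fin 6) (4:Fin 5) = (5:Fin 6) from rfl,
    show Fin.succAbove (2:Fin 6) (0:Fin 5) = (0:Fin 6) from rfl,
    show Fin.succAbove (2:Fin 6) (1:Fin 5) = (1:Fin 6) from rfl,
    show Fin.succAbove (2:Fin 6) (2:Fin 5) = (3:Fin 6) from rfl,
    show Fin.succAbove (2:Fin 6) (3:Fin 5) = (4:Fin 6) from rfl,
    show Fin.succAbove (2:Fin 6) (4:Fin 5) = (5:Fin 6) from rfl,
    show Fin.succAbove (3:Fin 6) (0:Fin 5) = (0:Fin 6) from rfl,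
    show Fin.succAbove (3:Fin 6) (1:Fin 5) = (1:Fin 6) from rfl,
    show Fin.succAbove (3:Fin 6) (2:Fin 5) = (2:Fin 6) from rfl,
    show Fin.succAbove (3:Fin 6) (3:Fin 5) = (4:Fin 6) from rfl,
    show Fin.succAbove (3:Fin 6) (4:Fin 5) = (5:Fin 6) from rfl,
    show Fin.succAbove (4:Fin 6) (0:Fin 5) = (0:Fin 6) from rfl,
    show Fin.succAbove (4:Fin 6) (1:Fin 5) = (1:Fin 6) from rfl,
    show Fin.succAbove (4:Fin 6) (2:Fin 5) = (2:Fin 6) from rfl,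
    show Fin.succAbove (4:Fin 6) (3:Fin 5) = (3:Fin 6) from rfl,
    show Fin.succAbove (4:Fin 6) (4:Fin 5) = (5:Fin 6) from rfl,
    show Fin.succAbove (5:Fin 6) (0:Fin 5) = (0:Fin 6) from rfl,
    show Fin.succAbove (5:Fin 6) (1:Fin 5) = (1:Fin 6) from rfl,
    show Fin.succAbove (5:Fin 6) (2:Fin 5) = (2:Fin 6) from rfl,
    show Fin.succAbove (5:Fin 6) (3:Fin 5) = (3:Fin 6) from rfl,
    show Fin.succAbove (5:Fin 6) (4:Fin 5) = (4:Fin 6) from rfl,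
    show (((0:Fin 6):ℕ)) = 0 from rfl,
    show (((1:Fin 6):ℕ)) = 1 from rfl,
    show (((2:Fin 6):ℕ)) = 2 from rfl,
    show (((3:Fin 6):ℕ)) = 3 from rfl,
    show (((4:Fin 6):ℕ)) = 4 from rfl,
    show (((5:Fin 6):ℕ)) = 5 from rfl]
  simp only [show ((-1:ℂ))^(0:ℕ) = 1 from by norm_num, show ((-1:ℂ))^(1:ℕ) = -1 from by norm_num, show ((-1:ℂ))^(2:ℕ) = 1 from by norm_num, show ((-1:ℂ))^(3:ℕ) = -1 from by norm_num, show ((-1:ℂ))^(4:ℕ) = 1 from by norm_num, show ((-1:ℂ))^(5:ℕ) = -1 from by norm_num, one_mul, neg_mul, neg_neg, mul_one, zero_add, add_zero]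
  ring

set_option maxRecDepth 40000 in
set_option maxHeartbeats 4000000 in
/-- **The Segre determinant for `k = 2, ℓ = 3`** in terms of the `2 × 2` minors `[ij]` of `A`
and the `3 × 3` minors `⟨ijk⟩` of `B` (the paper's columns `1,…,6` are `0,…,5` here):
`Seg_{2,3} = ([12][34][56] + [14][25][36])⟨123⟩⟨456⟩ − [13][25][46]⟨124⟩⟨356⟩
+ [12][35][46]⟨134⟩⟨256⟩ − [12][34][56]⟨135⟩⟨246⟩ + [13][24][56]⟨125⟩⟨346⟩`. -/
theorem segreDet_two_three (A : Matrix (Fin 2) (Fin 6) ℂ) (B : Matrix (Fin 3) (Fin 6) ℂ) :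
    segreDet 2 3 A B =
      (minor2 A 0 1 * minor2 A 2 3 * minor2 A 4 5
          + minor2 A 0 3 * minor2 A 1 4 * minor2 A 2 5) * minor3 B 0 1 2 * minor3 B 3 4 5
        - minor2 A 0 2 * minor2 A 1 4 * minor2 A 3 5 * minor3 B 0 1 3 * minor3 B 2 4 5
        + minor2 A 0 1 * minor2 A 2 4 * minor2 A 3 5 * minor3 B 0 2 3 * minor3 B 1 4 5
        - minor2 A 0 1 * minor2 A 2 3 * minor2 A 4 5 * minor3 B 0 2 4 * minor3 B 1 3 5
        + minor2 A 0 2 * minor2 A 1 3 * minor2 A 4 5 * minor3 B 0 1 4 * minor3 B 2 3 5 := by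
  have h0 : ∀ m : Fin 6, segreMatrix 2 3 A B (0 : Fin 6) m = A 0 m * B 0 m := fun _ => rfl
  have h1 : ∀ m : Fin 6, segreMatrix 2 3 A B (1 : Fin 6) m = A 0 m * B 1 m := fun _ => rfl
  have h2 : ∀ m : Fin 6, segreMatrix 2 3 A B (2 : Fin 6) m = A 0 m * B 2 m := fun _ => rfl
  have h3 : ∀ m : Fin 6, segreMatrix 2 3 A B (3 : Fin 6) m = A 1 m * B 0 m := fun _ => rfl
  have h4 : ∀ m : Fin 6, segreMatrix 2 3 A B (4 : Fin 6) m = A 1 m * B 1 m := fun _ => rfl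
  have h5 : ∀ m : Fin 6, segreMatrix 2 3 A B (5 : Fin 6) m = A 1 m * B 2 m := fun _ => rfl
  have hv2 : ∀ (i j k : Fin 6), (![i, j, k] : Fin 3 → Fin 6) 2 = k := fun _ _ _ => rfl
  rw [show segreDet 2 3 A B = (segreMatrix 2 3 A B).det from rfl, det_fin_6x]
  simp only [h0, h1, h2, h3, h4, h5]
  simp only [minor2, minor3, Matrix.det_fin_three, Matrix.of_apply,
    Matrix.cons_val_zero, Matrix.cons_val_one, Matrix.head_cons, hv2]
  ring
end

section
/- Let k ≥ 2 and let π₁, π₂ : ℝ^{2k−2} → ℝ^k be surjective linear maps with ker π₁ ∩ ker π₂ = {0}. Then there exists a nonzero k×k real matrix F of rank at most 2 such that for every c ∈ ℝ^{2k−2}, the bilinear expression vanishes: (π₂ c)ᵀ F (π₁ c) = 0, i.e. ∑_{i,j} (π₂ c)(i) · F(i,j) · (π₁ c)(j) = 0. -/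
set_option maxHeartbeats 800000 in
/-- **Existence of a rank-≤ 2 fundamental matrix.**  Let `k ≥ 2` and let
`π₁, π₂ : ℝ^{2k−2} → ℝ^k` be surjective linear maps whose kernels intersect trivially.
Then there is a nonzero `k × k` real matrix `F` of rank at most `2` such that
`(π₂ c)ᵀ F (π₁ c) = 0` for every `c ∈ ℝ^{2k−2}`. -/
theorem exists_fundamental_matrix (k : ℕ) (hk : 2 ≤ k)
    (π₁ π₂ : (Fin (2 * k - 2) → ℝ) →ₗ[ℝ] (Fin k → ℝ))
    (h₁ : Function.Surjective π₁) (h₂ : Function.Surjective π₂)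
    (hker : LinearMap.ker π₁ ⊓ LinearMap.ker π₂ = ⊥) :
    ∃ F : Matrix (Fin k) (Fin k) ℝ, F ≠ 0 ∧ F.rank ≤ 2 ∧
      ∀ c : Fin (2 * k - 2) → ℝ,
        ∑ i : Fin k, ∑ j : Fin k, π₂ c i * F i j * π₁ c j = 0 := by
  classical
  set Φ : (Fin (2 * k - 2) → ℝ) →ₗ[ℝ] (Fin k → ℝ) × (Fin k → ℝ) := π₁.prod π₂ with hΦdef
  have hΦinj : Function.Injective Φ := by
    rw [← LinearMap.ker_eq_bot, hΦdef, LinearMap.ker_prod, hker]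
  have hsurj : Function.Surjective Φ.dualMap :=
    LinearMap.dualMap_surjective_of_injective hΦinj
  have hfr : Module.finrank ℝ (LinearMap.ker Φ.dualMap) = 2 := by
    have h1 := LinearMap.finrank_range_add_finrank_ker Φ.dualMap
    rw [LinearMap.range_eq_top.mpr hsurj] at h1
    have e1 : Module.finrank ℝ (Module.Dual ℝ ((Fin k → ℝ) × (Fin k → ℝ))) = 2 * k := by
      rw [Subspace.dual_finrank_eq]
      simp [Module.finrank_prod]
      ring
    have e2 : Module.finrank ℝ (Module.Dual ℝ (Fin (2 * k - 2) → ℝ)) = 2 * k - 2 := by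
      rw [Subspace.dual_finrank_eq]; simp
    rw [e1] at h1
    have h2' : Module.finrank ℝ
        (⊤ : Submodule ℝ (Module.Dual ℝ (Fin (2*k-2) → ℝ))) = 2*k-2 := by
      rw [finrank_top, e2]
    rw [h2'] at h1
    omega
  -- extract two linearly independent functionals in the kernel of the dual map
  have hne : LinearMap.ker Φ.dualMap ≠ ⊥ := by
    intro h
    rw [h, finrank_bot] at hfr
    omega
  obtain ⟨φ₀, hφ₀mem, hφ₀ne⟩ := Submodule.exists_mem_ne_zero_of_ne_bot hne
  have hspan_lt : Submodule.span ℝ {φ₀} < LinearMap.ker Φ.dualMap := by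
    refine lt_of_le_of_ne ((Submodule.span_singleton_le_iff_mem _ _).mpr hφ₀mem) ?_
    intro h
    rw [← h, finrank_span_singleton hφ₀ne] at hfr
    omega
  obtain ⟨φ₁, hφ₁mem, hφ₁nspan⟩ := SetLike.exists_of_lt hspan_lt
  -- independence of φ₀, φ₁
  have hφind : ∀ s t : ℝ, s • φ₀ + t • φ₁ = 0 → s = 0 ∧ t = 0 := by
    intro s t hst
    have ht : t = 0 := by
      by_contra ht
      apply hφ₁nspan
      rw [Submodule.mem_span_singleton]
      refine ⟨-s / t, ?_⟩
      have h' : t • φ₁ = -(s • φ₀) := by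
        rw [eq_neg_iff_add_eq_zero, add_comm]; exact hst
      have h'' := congrArg (fun z => t⁻¹ • z) h'
      simp only [smul_smul, inv_mul_cancel₀ ht, one_smul, smul_neg] at h''
      rw [h'', ← neg_smul]
      congr 1
      field_simp
    rw [ht, zero_smul, add_zero, smul_eq_zero] at hst
    exact ⟨hst.resolve_right hφ₀ne, ht⟩
  -- expansion of any dual functional
  have hexp : ∀ (ψ : Module.Dual ℝ ((Fin k → ℝ) × (Fin k → ℝ))) (x y : Fin k → ℝ),
      ψ (x, y) = (∑ i, x i * ψ (Pi.single i 1, 0)) + ∑ i, y i * ψ (0, Pi.single i 1) := by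
    intro ψ x y
    have hxy : (x, y) = ((x, (0 : Fin k → ℝ)) + ((0 : Fin k → ℝ), y)) := by simp
    rw [hxy, map_add]
    congr 1
    · have := LinearMap.pi_apply_eq_sum_univ
        (ψ.comp (LinearMap.inl ℝ (Fin k → ℝ) (Fin k → ℝ))) x
      simp only [LinearMap.comp_apply, LinearMap.inl_apply] at this
      rw [this]
      refine Finset.sum_congr rfl fun i _ => ?_
      rw [smul_eq_mul,
        show (fun j => if i = j then (1:ℝ) else 0) = Pi.single i 1 from
          funext fun j => by simp [Pi.single_apply, eq_comm]]
    · have := LinearMap.pi_apply_eq_sum_univ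
        (ψ.comp (LinearMap.inr ℝ (Fin k → ℝ) (Fin k → ℝ))) y
      simp only [LinearMap.comp_apply, LinearMap.inr_apply] at this
      rw [this]
      refine Finset.sum_congr rfl fun i _ => ?_
      rw [smul_eq_mul,
        show (fun j => if i = j then (1:ℝ) else 0) = Pi.single i 1 from
          funext fun j => by simp [Pi.single_apply, eq_comm]]
  -- any kernel element vanishes on pairs (π₁ c, π₂ c)
  have hvanish : ∀ ψ ∈ LinearMap.ker Φ.dualMap, ∀ c : Fin (2 * k - 2) → ℝ,
      (∑ i, π₁ c i * ψ (Pi.single i 1, 0)) + ∑ i, π₂ c i * ψ (0, Pi.single i 1) = 0 := by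
    intro ψ hψ c
    have h0 : ψ (Φ c) = 0 := by
      rw [LinearMap.mem_ker] at hψ
      calc ψ (Φ c) = (Φ.dualMap ψ) c := rfl
        _ = 0 := by rw [hψ]; rfl
    have hΦc : Φ c = (π₁ c, π₂ c) := rfl
    rw [hΦc, hexp] at h0
    exact h0
  -- a vector that pairs to zero with all of ℝ^k is zero
  have hzero_vec : ∀ (w : Fin k → ℝ), (∀ y : Fin k → ℝ, ∑ i, y i * w i = 0) → w = 0 := by
    intro w hw
    ext j
    have := hw (Pi.single j 1)
    simp only [Pi.single_apply] at this
    rw [Finset.sum_eq_single j] at this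
    · simpa using this
    · intro b _ hb; simp [hb]
    · intro h; exact absurd (Finset.mem_univ j) h
  -- notation for the components
  set u : Fin 2 → Fin k → ℝ :=
    fun a i => (if a = 0 then φ₀ else φ₁) (Pi.single i 1, 0) with hu
  set v : Fin 2 → Fin k → ℝ :=
    fun a i => (if a = 0 then φ₀ else φ₁) (0, Pi.single i 1) with hv
  have hmem : ∀ a : Fin 2, (if a = 0 then φ₀ else φ₁) ∈ LinearMap.ker Φ.dualMap := by
    intro a; by_cases h : a = 0 <;> simp [h, hφ₀mem, hφ₁mem]
  have hvan : ∀ (a : Fin 2) (c : Fin (2 * k - 2) → ℝ),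
      (∑ i, π₁ c i * u a i) + ∑ i, π₂ c i * v a i = 0 := by
    intro a c
    exact hvanish _ (hmem a) c
  -- linear independence of u 0 and u 1
  have huind : ∀ s t : ℝ, (∀ i, s * u 0 i + t * u 1 i = 0) → s = 0 ∧ t = 0 := by
    intro s t hst
    set ψ : Module.Dual ℝ ((Fin k → ℝ) × (Fin k → ℝ)) := s • φ₀ + t • φ₁ with hψdef
    have hψmem : ψ ∈ LinearMap.ker Φ.dualMap :=
      Submodule.add_mem _ (Submodule.smul_mem _ _ hφ₀mem) (Submodule.smul_mem _ _ hφ₁mem)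
    have hψx : ∀ i, ψ (Pi.single i 1, 0) = 0 := by
      intro i
      have := hst i
      simpa [hψdef, hu] using this
    -- the second components of ψ vanish
    have hψy : ∀ j, ψ ((0 : Fin k → ℝ), Pi.single j 1) = 0 := by
      have key : ∀ y : Fin k → ℝ, ∑ i, y i * ψ (0, Pi.single i 1) = 0 := by
        intro y
        obtain ⟨c, hc⟩ := h₂ y
        have h0 := hvanish ψ hψmem c
        simp only [hψx, mul_zero, Finset.sum_const_zero, zero_add] at h0
        rw [← hc]
        exact h0
      have := hzero_vec (fun i => ψ (0, Pi.single i 1)) key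
      intro j
      exact congrFun this j
    -- hence ψ = 0
    have hψ0 : ψ = 0 := by
      apply LinearMap.ext
      rintro ⟨x, y⟩
      rw [hexp ψ x y]
      simp [hψx, hψy]
    exact hφind s t hψ0
  -- v 0 ≠ 0
  have hv0ne : ∃ i₀, v 0 i₀ ≠ 0 := by
    by_contra h
    push_neg at h
    have hu0 : ∀ i, u 0 i = 0 := by
      have key : ∀ x : Fin k → ℝ, ∑ i, x i * u 0 i = 0 := by
        intro x
        obtain ⟨c, hc⟩ := h₁ x
        have h0 := hvan 0 c
        simp only [h, mul_zero, Finset.sum_const_zero, add_zero] at h0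
        rw [← hc]
        exact h0
      intro i
      exact congrFun (hzero_vec (u 0) key) i
    have := huind 1 0 (by intro i; simp [hu0])
    exact one_ne_zero this.1
  obtain ⟨i₀, hi₀⟩ := hv0ne
  -- the fundamental matrix
  set V : Matrix (Fin k) (Fin 2) ℝ :=
    Matrix.of (fun i t => if t = 0 then v 0 i else -(v 1 i)) with hV
  set U : Matrix (Fin 2) (Fin k) ℝ :=
    Matrix.of (fun t j => if t = 0 then u 1 j else u 0 j) with hU
  refine ⟨V * U, ?_, ?_, ?_⟩
  · -- nonzero
    intro hF0
    have hFij : ∀ i j, v 0 i * u 1 j - v 1 i * u 0 j = 0 := by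
      intro i j
      have := congrFun (congrFun hF0 i) j
      simp only [Matrix.mul_apply, Fin.sum_univ_two, hV, hU, Matrix.of_apply,
        Matrix.zero_apply] at this
      simpa [sub_eq_add_neg] using this
    have hcomb : ∀ j, (v 1 i₀ / v 0 i₀) * u 0 j + (-1) * u 1 j = 0 := by
      intro j
      have := hFij i₀ j
      field_simp
      nlinarith [hFij i₀ j]
    have := huind (v 1 i₀ / v 0 i₀) (-1) hcomb
    simpa using this.2
  · -- rank at most 2
    calc (V * U).rank ≤ V.rank := Matrix.rank_mul_le_left V U
      _ ≤ Fintype.card (Fin 2) := Matrix.rank_le_card_width V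
      _ = 2 := by simp
  · -- the bilinear identity
    intro c
    have hFij : ∀ i j, (V * U) i j = v 0 i * u 1 j - v 1 i * u 0 j := by
      intro i j
      simp only [Matrix.mul_apply, Fin.sum_univ_two, hV, hU, Matrix.of_apply,
        if_pos, one_ne_zero, if_neg, Fin.one_eq_zero_iff, Nat.succ_ne_self,
        ite_true, ite_false, if_true, if_false]
      norm_num
      ring
    have h0 := hvan 0 c
    have h1 := hvan 1 c
    calc ∑ i, ∑ j, π₂ c i * (V * U) i j * π₁ c j
        = ∑ i, ∑ j, ((π₂ c i * v 0 i) * (π₁ c j * u 1 j)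
            - (π₂ c i * v 1 i) * (π₁ c j * u 0 j)) := by
          refine Finset.sum_congr rfl fun i _ => Finset.sum_congr rfl fun j _ => ?_
          rw [hFij]; ring
      _ = (∑ i, π₂ c i * v 0 i) * (∑ j, π₁ c j * u 1 j)
            - (∑ i, π₂ c i * v 1 i) * (∑ j, π₁ c j * u 0 j) := by
          rw [Finset.sum_mul_sum, Finset.sum_mul_sum, ← Finset.sum_sub_distrib]
          refine Finset.sum_congr rfl fun i _ => ?_
          rw [← Finset.sum_sub_distrib]
      _ = 0 := by
          linear_combination (∑ j, π₁ c j * u 1 j) * h0 - (∑ j, π₁ c j * u 0 j) * h1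
end

section
/- Let k ≥ 2, let π₁, π₂ : ℝ^{2k−2} → ℝ^k be surjective linear maps with ker π₁ ∩ ker π₂ = {0}, and let C₁, …, C_{k²−1} ∈ ℝ^{2k−2}. Set Aᵢ = π₁(Cᵢ) and Bᵢ = π₂(Cᵢ) for each i. Suppose the linear space K = { F a k×k real matrix : Bᵢᵀ F Aᵢ = 0 for all i = 1, …, k²−1 } is one-dimensional. Then every matrix F ∈ K has rank at most 2. -/
open Matrix Module Submodule

private lemma vecMulVec_mulVec_eq {k : ℕ} (w v x : Fin k → ℝ) :
    (Matrix.vecMulVec w v).mulVec x = (v ⬝ᵥ x) • w := by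
  funext i
  simp only [Matrix.mulVec, Matrix.vecMulVec_apply, dotProduct, Pi.smul_apply, smul_eq_mul]
  rw [Finset.sum_mul]
  exact Finset.sum_congr rfl fun j _ => by ring

/-- **The fundamental matrix of two projections of a common configuration has rank ≤ 2.**
Let `k ≥ 2`, let `π₁, π₂ : ℝ^{2k−2} → ℝ^k` be surjective linear maps whose kernels intersect
trivially, and let `C₁, …, C_{k²−1}` be points of `ℝ^{2k−2}` with images `Aᵢ = π₁ Cᵢ` and
`Bᵢ = π₂ Cᵢ`.  Suppose the space `K` of `k × k` real matrices `F` with `Bᵢᵀ F Aᵢ = 0` for all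
`i` is one-dimensional.  Then every `F ∈ K` has rank at most `2`. -/
theorem fundamental_matrix_rank_le_two (k : ℕ) (hk : 2 ≤ k)
    (π₁ π₂ : (Fin (2 * k - 2) → ℝ) →ₗ[ℝ] (Fin k → ℝ))
    (h₁ : Function.Surjective π₁) (h₂ : Function.Surjective π₂)
    (hker : LinearMap.ker π₁ ⊓ LinearMap.ker π₂ = ⊥)
    (C : Fin (k ^ 2 - 1) → (Fin (2 * k - 2) → ℝ))
    (K : Submodule ℝ (Matrix (Fin k) (Fin k) ℝ))
    (hK : ∀ F : Matrix (Fin k) (Fin k) ℝ,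
      F ∈ K ↔ ∀ m : Fin (k ^ 2 - 1),
        ∑ i : Fin k, ∑ j : Fin k, π₂ (C m) i * F i j * π₁ (C m) j = 0)
    (hdim : Module.finrank ℝ K = 1) :
    ∀ F ∈ K, F.rank ≤ 2 := by
  classical
  -- the bilinear pairing map
  let L : ((Fin k → ℝ) × (Fin k → ℝ)) →ₗ[ℝ] ((Fin (2 * k - 2) → ℝ) →ₗ[ℝ] ℝ) :=
  { toFun := fun p =>
    { toFun := fun x => p.1 ⬝ᵥ π₁ x + p.2 ⬝ᵥ π₂ x
      map_add' := by intro x y; simp [dotProduct_add]; ring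
      map_smul' := by intro c x; simp [dotProduct_smul]; ring }
    map_add' := by intro p q; ext x; simp [add_dotProduct]; ring
    map_smul' := by intro c p; ext x; simp [smul_dotProduct]; ring }
  have hLapp : ∀ (p : (Fin k → ℝ) × (Fin k → ℝ)) x, L p x = p.1 ⬝ᵥ π₁ x + p.2 ⬝ᵥ π₂ x :=
    fun p x => rfl
  -- elements of the kernel
  have hkerL : ∀ p ∈ LinearMap.ker L, ∀ x, p.1 ⬝ᵥ π₁ x + p.2 ⬝ᵥ π₂ x = 0 := by
    intro p hp x
    have := LinearMap.congr_fun (LinearMap.mem_ker.mp hp) x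
    simpa [hLapp] using this
  -- in the kernel, one component zero forces the other zero
  have hz1 : ∀ p ∈ LinearMap.ker L, p.1 = 0 → p.2 = 0 := by
    intro p hp h1
    funext i
    obtain ⟨x, hx⟩ := h₂ (Pi.single i 1)
    have := hkerL p hp x
    rw [h1, hx] at this
    simpa using this
  have hz2 : ∀ p ∈ LinearMap.ker L, p.2 = 0 → p.1 = 0 := by
    intro p hp h1
    funext i
    obtain ⟨x, hx⟩ := h₁ (Pi.single i 1)
    have := hkerL p hp x
    rw [h1, hx] at this
    simpa using this
  -- the kernel has dimension at least 2
  have hfr : 2 ≤ finrank ℝ (LinearMap.ker L) := by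
    have hrn := LinearMap.finrank_range_add_finrank_ker L
    have hdom : finrank ℝ ((Fin k → ℝ) × (Fin k → ℝ)) = k + k := by
      simp [Module.finrank_prod]
    have hcod : finrank ℝ ((Fin (2 * k - 2) → ℝ) →ₗ[ℝ] ℝ) = 2 * k - 2 := by
      simp [Module.finrank_linearMap]
    have hrange : finrank ℝ (LinearMap.range L) ≤ 2 * k - 2 := by
      calc finrank ℝ (LinearMap.range L) ≤ finrank ℝ ((Fin (2 * k - 2) → ℝ) →ₗ[ℝ] ℝ) :=
        Submodule.finrank_le _
      _ = 2 * k - 2 := hcod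
    rw [hdom] at hrn
    omega
  -- two independent kernel elements
  let b := Module.finBasis ℝ (LinearMap.ker L)
  let e : Fin 2 → Fin (finrank ℝ (LinearMap.ker L)) := fun i => Fin.castLE hfr i
  let p : Fin 2 → ((Fin k → ℝ) × (Fin k → ℝ)) := fun i => (b (e i) : _)
  have hpmem : ∀ i, p i ∈ LinearMap.ker L := fun i => SetLike.coe_mem _
  have hli : LinearIndependent ℝ p := by
    have := (b.linearIndependent.map' (LinearMap.ker L).subtype
      (Submodule.ker_subtype _)).comp e (Fin.castLE_injective hfr)
    exact this
  rw [linearIndependent_fin2] at hli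
  obtain ⟨hp1ne, hnosmul⟩ := hli
  set u₁ : Fin k → ℝ := (p 0).1 with hu₁
  set v₁ : Fin k → ℝ := (p 0).2 with hv₁
  set u₂ : Fin k → ℝ := (p 1).1 with hu₂
  set v₂ : Fin k → ℝ := (p 1).2 with hv₂
  -- the candidate fundamental matrix
  set F₀ : Matrix (Fin k) (Fin k) ℝ :=
    Matrix.vecMulVec v₁ u₂ - Matrix.vecMulVec v₂ u₁ with hF₀
  have hF₀app : ∀ i j, F₀ i j = v₁ i * u₂ j - v₂ i * u₁ j := by
    intro i j; simp [hF₀, Matrix.vecMulVec_apply]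
  -- F₀ satisfies all the constraints
  have hF₀K : F₀ ∈ K := by
    rw [hK]
    intro m
    have e1 := hkerL (p 0) (hpmem 0) (C m)
    have e2 := hkerL (p 1) (hpmem 1) (C m)
    have hsum : ∀ w z : Fin k → ℝ, (w ⬝ᵥ π₂ (C m)) * (z ⬝ᵥ π₁ (C m))
        = ∑ i : Fin k, ∑ j : Fin k, π₂ (C m) i * (w i * z j) * π₁ (C m) j := by
      intro w z
      rw [dotProduct, dotProduct, Finset.sum_mul_sum]
      exact Finset.sum_congr rfl fun i _ => Finset.sum_congr rfl fun j _ => by ring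
    calc ∑ i : Fin k, ∑ j : Fin k, π₂ (C m) i * F₀ i j * π₁ (C m) j
        = ∑ i : Fin k, ∑ j : Fin k, (π₂ (C m) i * (v₁ i * u₂ j) * π₁ (C m) j
            - π₂ (C m) i * (v₂ i * u₁ j) * π₁ (C m) j) := by
          refine Finset.sum_congr rfl fun i _ => Finset.sum_congr rfl fun j _ => ?_
          rw [hF₀app]; ring
      _ = (v₁ ⬝ᵥ π₂ (C m)) * (u₂ ⬝ᵥ π₁ (C m)) - (v₂ ⬝ᵥ π₂ (C m)) * (u₁ ⬝ᵥ π₁ (C m)) := by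
          simp only [Finset.sum_sub_distrib]
          rw [hsum, hsum]
      _ = 0 := by
          have h1 : v₁ ⬝ᵥ π₂ (C m) = -(u₁ ⬝ᵥ π₁ (C m)) := by linarith
          have h2 : v₂ ⬝ᵥ π₂ (C m) = -(u₂ ⬝ᵥ π₁ (C m)) := by linarith
          rw [h1, h2]; ring
  -- F₀ is nonzero
  have hF₀ne : F₀ ≠ 0 := by
    intro h0
    have hij : ∀ i j, v₁ i * u₂ j = v₂ i * u₁ j := by
      intro i j
      have := congrFun (congrFun h0 i) j
      rw [hF₀app i j] at this
      simp only [Matrix.zero_apply] at this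
      linarith
    have hp0ne : p 0 ≠ 0 := by
      intro h
      exact hnosmul 0 (by rw [h]; simp)
    have hu₁ne : u₁ ≠ 0 := fun h => hp0ne (Prod.ext h (hz1 _ (hpmem 0) h))
    have hv₁ne : v₁ ≠ 0 := fun h => hp0ne (Prod.ext (hz2 _ (hpmem 0) h) h)
    have hv₂ne : v₂ ≠ 0 := fun h => hp1ne (Prod.ext (hz2 _ (hpmem 1) h) h)
    obtain ⟨j₀, hj₀⟩ := Function.ne_iff.mp hu₁ne
    obtain ⟨i₀, hi₀⟩ := Function.ne_iff.mp hv₁ne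
    simp only [Pi.zero_apply] at hj₀ hi₀
    set c : ℝ := u₂ j₀ / u₁ j₀ with hc
    have hv2c : v₂ = c • v₁ := by
      funext i
      simp only [Pi.smul_apply, smul_eq_mul, hc]
      have h := (hij i j₀).symm
      calc v₂ i = v₂ i * u₁ j₀ / u₁ j₀ := by field_simp
        _ = v₁ i * u₂ j₀ / u₁ j₀ := by rw [h]
        _ = u₂ j₀ / u₁ j₀ * v₁ i := by ring
    have hu2c : u₂ = c • u₁ := by
      funext j
      simp only [Pi.smul_apply, smul_eq_mul]
      have h1 := hij i₀ j
      have h2 : v₂ i₀ = c * v₁ i₀ := by rw [hv2c]; simp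
      have h3 : v₁ i₀ * u₂ j = v₁ i₀ * (c * u₁ j) := by rw [h1, h2]; ring
      exact mul_left_cancel₀ hi₀ h3
    have hcne : c ≠ 0 := by
      intro h
      apply hv₂ne
      rw [hv2c, h, zero_smul]
    apply hnosmul c⁻¹
    have hp1c : p 1 = c • p 0 := Prod.ext hu2c hv2c
    rw [hp1c, smul_smul, inv_mul_cancel₀ hcne, one_smul]
  -- K is spanned by F₀
  have hx₀ : (⟨F₀, hF₀K⟩ : K) ≠ 0 := by
    intro h
    exact hF₀ne (congrArg Subtype.val h)
  have hspan : Submodule.span ℝ ({(⟨F₀, hF₀K⟩ : K)} : Set K) = ⊤ :=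
    (finrank_eq_one_iff_of_nonzero _ hx₀).mp hdim
  -- conclude
  intro F hF
  have hmem : (⟨F, hF⟩ : K) ∈ Submodule.span ℝ ({(⟨F₀, hF₀K⟩ : K)} : Set K) := by
    rw [hspan]; trivial
  obtain ⟨c, hc⟩ := Submodule.mem_span_singleton.mp hmem
  have hFc : F = c • F₀ := by
    have := congrArg Subtype.val hc
    simpa using this.symm
  -- rank bound via the column space
  have hle : LinearMap.range F.mulVecLin ≤ Submodule.span ℝ ({v₁, v₂} : Set (Fin k → ℝ)) := by
    rintro y ⟨x, rfl⟩
    rw [Submodule.mem_span_pair]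
    refine ⟨c * (u₂ ⬝ᵥ x), -(c * (u₁ ⬝ᵥ x)), ?_⟩
    have : F.mulVec x = c • ((u₂ ⬝ᵥ x) • v₁ - (u₁ ⬝ᵥ x) • v₂) := by
      rw [hFc, smul_mulVec, hF₀, sub_mulVec, vecMulVec_mulVec_eq, vecMulVec_mulVec_eq]
    rw [Matrix.mulVecLin_apply, this]
    module
  have hs2 : finrank ℝ (Submodule.span ℝ ({v₁, v₂} : Set (Fin k → ℝ))) ≤ 2 := by
    refine (finrank_span_le_card _).trans ?_
    simp only [Set.toFinset_insert, Set.toFinset_singleton]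
    exact (Finset.card_insert_le _ _).trans (by simp)
  calc F.rank = finrank ℝ (LinearMap.range F.mulVecLin) := rfl
    _ ≤ finrank ℝ (Submodule.span ℝ ({v₁, v₂} : Set (Fin k → ℝ))) := Submodule.finrank_mono hle
    _ ≤ 2 := hs2
end

section
/- Let k ≥ 1 and ℓ ≥ 1, and let μ be the Young diagram whose row lengths are ℓ, ℓ, …, ℓ (k−1 times) followed by ℓ−1. Then the number of semistandard Young tableaux of shape μ whose entries all lie in {0, 1, …, k−1} equals k. -/
/-- Entry function of the candidate tableaux: `i` everywhere, except `i+1` in the last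
column (`j = ℓ - 1`) for rows `i ≥ m`. -/
private def ssytEaux (ℓ : ℕ) (μ : YoungDiagram) (m : ℕ) (i j : ℕ) : ℕ :=
  if (i, j) ∈ μ then i + (if ℓ = j + 1 ∧ m ≤ i then 1 else 0) else 0

/-- A downward-closed finset of naturals is an initial segment. -/
private lemma mem_iff_lt_card_of_downward_closed (s : Finset ℕ)
    (h : ∀ a b : ℕ, a ≤ b → b ∈ s → a ∈ s) (i : ℕ) : i ∈ s ↔ i < s.card := by
  constructor
  · intro hi
    have hsub : Finset.range (i + 1) ⊆ s := fun a ha =>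
      h a i (Nat.lt_succ_iff.mp (Finset.mem_range.mp ha)) hi
    have := Finset.card_le_card hsub
    simpa using this
  · intro hi
    by_contra hns
    have hsub : s ⊆ Finset.range i := by
      intro b hb
      refine Finset.mem_range.mpr ?_
      by_contra hbi
      exact hns (h i b (le_of_not_gt hbi) hb)
    have := Finset.card_le_card hsub
    simp only [Finset.card_range] at this
    omega

/-- **Counting semistandard Young tableaux of shape `α^c`.**
Let `k, ℓ ≥ 1` and let `μ` be the Young diagram with `k − 1` rows of length `ℓ` followed by one
row of length `ℓ − 1` (so the cells of `μ` are the `(i, j)` with `i < k − 1, j < ℓ`, together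
with the `(k − 1, j)` with `j < ℓ − 1`).  Then the number of semistandard Young tableaux of
shape `μ` with all entries in `{0, 1, …, k − 1}` equals `k`. -/
theorem card_ssyt_shape_eq (k ℓ : ℕ) (hk : 1 ≤ k) (hℓ : 1 ≤ ℓ) (μ : YoungDiagram)
    (hμ : ∀ i j : ℕ, (i, j) ∈ μ ↔ (i < k - 1 ∧ j < ℓ) ∨ (i = k - 1 ∧ j < ℓ - 1)) :
    Nat.card {T : SemistandardYoungTableau μ // ∀ i j : ℕ, (i, j) ∈ μ → T i j < k} = k := by
  classical
  -- basic facts about cells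
  have hcell_j : ∀ i j, (i, j) ∈ μ → j + 1 ≤ ℓ := by
    intro i j h; rcases (hμ i j).mp h with ⟨_, h2⟩ | ⟨_, h2⟩ <;> omega
  have hcell_i : ∀ i j, (i, j) ∈ μ → i + 1 ≤ k := by
    intro i j h; rcases (hμ i j).mp h with ⟨h1, _⟩ | ⟨h1, _⟩ <;> omega
  -- column entries grow at least linearly
  have lb2 : ∀ (T : SemistandardYoungTableau μ) (d i j : ℕ),
      (i + d, j) ∈ μ → T i j + d ≤ T (i + d) j := by
    intro T d
    induction d with
    | zero => intro i j h; simp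
    | succ d ih =>
      intro i j h
      have h' : (i + d, j) ∈ μ := μ.up_left_mem (by omega) le_rfl h
      have h1 := ih i j h'
      have h2 := T.col_strict (show i + d < i + (d + 1) by omega) h
      omega
  have lbA : ∀ (T : SemistandardYoungTableau μ) (i j : ℕ), (i, j) ∈ μ → i ≤ T i j := by
    intro T i j h
    have h0 : ((0 : ℕ) + i, j) ∈ μ := by rw [Nat.zero_add]; exact h
    have := lb2 T i 0 j h0
    rw [Nat.zero_add] at this
    omega
  -- the candidate tableaux
  have hrow : ∀ (m : ℕ) {i j1 j2 : ℕ}, j1 < j2 → (i, j2) ∈ μ →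
      ssytEaux ℓ μ m i j1 ≤ ssytEaux ℓ μ m i j2 := by
    intro m i j1 j2 hj hc
    have hc1 : (i, j1) ∈ μ := μ.up_left_mem le_rfl hj.le hc
    have hj2 := hcell_j _ _ hc
    simp only [ssytEaux, if_pos hc, if_pos hc1]
    split_ifs <;> omega
  have hcol : ∀ (m : ℕ) {i1 i2 j : ℕ}, i1 < i2 → (i2, j) ∈ μ →
      ssytEaux ℓ μ m i1 j < ssytEaux ℓ μ m i2 j := by
    intro m i1 i2 j hi hc
    have hc1 : (i1, j) ∈ μ := μ.up_left_mem hi.le le_rfl hc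
    simp only [ssytEaux, if_pos hc, if_pos hc1]
    split_ifs <;> omega
  have hbound : ∀ (m : ℕ) (i j : ℕ), (i, j) ∈ μ → ssytEaux ℓ μ m i j < k := by
    intro m i j hc
    simp only [ssytEaux, if_pos hc]
    rcases (hμ i j).mp hc with ⟨h1, h2⟩ | ⟨h1, h2⟩ <;> split_ifs <;> omega
  let Ψ : Fin k → {T : SemistandardYoungTableau μ // ∀ i j : ℕ, (i, j) ∈ μ → T i j < k} :=
    fun m => ⟨⟨ssytEaux ℓ μ m, fun {i j1 j2} hj hc => hrow m hj hc,
      fun {i1 i2 j} hi hc => hcol m hi hc, fun {i j} h => if_neg h⟩,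
      fun i j hc => hbound m i j hc⟩
  have hΨ : ∀ (m : Fin k) (i j : ℕ), (Ψ m).1 i j = ssytEaux ℓ μ m i j := fun _ _ _ => rfl
  -- the inverse statistic
  let S : SemistandardYoungTableau μ → Finset ℕ :=
    fun T => (Finset.range (k - 1)).filter (fun i => T i (ℓ - 1) = i)
  have hSdc : ∀ (T : SemistandardYoungTableau μ), ∀ a b : ℕ, a ≤ b → b ∈ S T → a ∈ S T := by
    intro T a b hab hb
    simp only [S, Finset.mem_filter, Finset.mem_range] at hb ⊢
    obtain ⟨hbk, hTb⟩ := hb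
    have hcb : (b, ℓ - 1) ∈ μ := (hμ b (ℓ - 1)).mpr (Or.inl ⟨hbk, by omega⟩)
    have hca : (a, ℓ - 1) ∈ μ := μ.up_left_mem hab le_rfl hcb
    have hd : a + (b - a) = b := by omega
    have h1 := lb2 T (b - a) a (ℓ - 1) (by rw [hd]; exact hcb)
    rw [hd] at h1
    have h2 := lbA T a (ℓ - 1) hca
    constructor
    · omega
    · omega
  have hSmem : ∀ (T : SemistandardYoungTableau μ) (i : ℕ), i ∈ S T ↔ i < (S T).card :=
    fun T => mem_iff_lt_card_of_downward_closed (S T) (hSdc T)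
  have hScard : ∀ (T : SemistandardYoungTableau μ), (S T).card ≤ k - 1 := by
    intro T
    have := Finset.card_filter_le (Finset.range (k - 1)) (fun i => T i (ℓ - 1) = i)
    simpa using this
  -- full columns are forced
  have hfull : ∀ (T : SemistandardYoungTableau μ), (∀ i j : ℕ, (i, j) ∈ μ → T i j < k) →
      ∀ i j : ℕ, j + 1 < ℓ → (i, j) ∈ μ → T i j = i := by
    intro T hT i j hjl hc
    have hik := hcell_i _ _ hc
    have hcK : (k - 1, j) ∈ μ := (hμ (k - 1) j).mpr (Or.inr ⟨rfl, by omega⟩)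
    have hd : i + (k - 1 - i) = k - 1 := by omega
    have h1 := lb2 T (k - 1 - i) i j (by rw [hd]; exact hcK)
    rw [hd] at h1
    have h2 := hT (k - 1) j hcK
    have h3 := lbA T i j hc
    omega
  -- last column entries are i or i+1
  have hlast : ∀ (T : SemistandardYoungTableau μ), (∀ i j : ℕ, (i, j) ∈ μ → T i j < k) →
      ∀ i : ℕ, i < k - 1 → T i (ℓ - 1) ≤ i + 1 := by
    intro T hT i hik
    have hcK : (k - 2, ℓ - 1) ∈ μ := (hμ (k - 2) (ℓ - 1)).mpr (Or.inl ⟨by omega, by omega⟩)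
    have hd : i + (k - 2 - i) = k - 2 := by omega
    have h1 := lb2 T (k - 2 - i) i (ℓ - 1) (by rw [hd]; exact hcK)
    rw [hd] at h1
    have h2 := hT (k - 2) (ℓ - 1) hcK
    omega
  -- Ψ composed with the statistic is the identity
  have hSΨ : ∀ m : Fin k, (S (Ψ m).1).card = m := by
    intro m
    have : S (Ψ m).1 = Finset.range m := by
      ext x
      simp only [S, Finset.mem_filter, Finset.mem_range, hΨ]
      constructor
      · rintro ⟨hx, hE⟩
        have hc : (x, ℓ - 1) ∈ μ := (hμ x (ℓ - 1)).mpr (Or.inl ⟨hx, by omega⟩)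
        simp only [ssytEaux, if_pos hc] at hE
        split_ifs at hE with h <;> omega
      · intro hx
        have hxk : x < k - 1 := by have := m.isLt; omega
        have hc : (x, ℓ - 1) ∈ μ := (hμ x (ℓ - 1)).mpr (Or.inl ⟨hxk, by omega⟩)
        refine ⟨hxk, ?_⟩
        simp only [ssytEaux, if_pos hc]
        split_ifs with h <;> omega
    rw [this, Finset.card_range]
  have hinj : Function.Injective Ψ := by
    intro m1 m2 h
    have := congrArg (fun T => (S T.1).card) h
    simp only [hSΨ] at this
    exact Fin.ext this
  have hsurj : Function.Surjective Ψ := by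
    rintro ⟨T, hT⟩
    have hmk : (S T).card < k := by have := hScard T; omega
    refine ⟨⟨(S T).card, hmk⟩, ?_⟩
    apply Subtype.ext
    apply SemistandardYoungTableau.ext
    intro i j
    rw [hΨ]
    by_cases hc : (i, j) ∈ μ
    · have hjl := hcell_j _ _ hc
      simp only [ssytEaux, if_pos hc]
      rcases Nat.lt_or_ge (j + 1) ℓ with hj | hj
      · have hTij := hfull T hT i j hj hc
        split_ifs <;> omega
      · -- j = ℓ - 1, last column
        have hjeq : j = ℓ - 1 := by omega
        subst hjeq
        have hik : i < k - 1 := by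
          rcases (hμ i (ℓ - 1)).mp hc with ⟨h1, _⟩ | ⟨_, h2⟩
          · exact h1
          · omega
        have h1 := lbA T i (ℓ - 1) hc
        have h2 := hlast T hT i hik
        have h3 : T i (ℓ - 1) = i ↔ i < (S T).card := by
          rw [← hSmem T i]
          simp only [S, Finset.mem_filter, Finset.mem_range]
          constructor
          · intro h; exact ⟨hik, h⟩
          · intro h; exact h.2
        split_ifs with h <;> omega
    · simp only [ssytEaux, if_neg hc, T.zeros hc]
  exact Nat.card_eq_of_equiv_fin (Equiv.ofBijective Ψ ⟨hinj, hsurj⟩).symm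
end

section
/- Let k, ℓ be positive integers, n = kℓ, and let A be the k×n complex matrix whose entry A(i,m) equals 1 if column m lies in the i-th block {iℓ, iℓ+1, …, iℓ+ℓ−1} (0-indexed) and 0 otherwise, i.e. each block of ℓ consecutive columns equals the standard basis vector e_i. Then for every ℓ×n complex matrix B, the Segre determinant factors as the product of block minors: Seg_{k,ℓ}(A,B) = ∏_{i=0}^{k−1} det(B_i), where B_i is the ℓ×ℓ submatrix of B consisting of columns iℓ, iℓ+1, …, iℓ+ℓ−1. -/
/-- **Block factorization of the Segre determinant.**  Let `A` be the `k × kℓ` matrix whose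
`m`-th column is the standard basis vector `e_i` whenever `m` lies in the `i`-th block
`{iℓ, …, iℓ + ℓ − 1}` (0-indexed).  Then for every `ℓ × kℓ` matrix `B`,
`Seg_{k,ℓ}(A, B) = ∏_{i} det B_i`, where `B_i` is the `ℓ × ℓ` submatrix of `B` on the columns
`iℓ, …, iℓ + ℓ − 1`. -/
theorem segreDet_block_matrix (k ℓ : ℕ) (hk : 0 < k) (hℓ : 0 < ℓ)
    (A : Matrix (Fin k) (Fin (k * ℓ)) ℂ)
    (hA : ∀ (i : Fin k) (m : Fin (k * ℓ)),
      A i m = if (i : ℕ) * ℓ ≤ (m : ℕ) ∧ (m : ℕ) < (i : ℕ) * ℓ + ℓ then 1 else 0)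
    (B : Matrix (Fin ℓ) (Fin (k * ℓ)) ℂ) :
    segreDet k ℓ A B =
      ∏ i : Fin k, Matrix.det (Matrix.of fun r c : Fin ℓ =>
        B r ⟨(i : ℕ) * ℓ + (c : ℕ), by
          have hc : (c : ℕ) < ℓ := c.isLt
          have hi : (i : ℕ) + 1 ≤ k := i.isLt
          calc (i : ℕ) * ℓ + (c : ℕ) < ((i : ℕ) + 1) * ℓ := by
                rw [Nat.add_mul, Nat.one_mul]; omega
            _ ≤ k * ℓ := Nat.mul_le_mul_right ℓ hi⟩) := by
  classical
  set D : Fin k → Matrix (Fin ℓ) (Fin ℓ) ℂ := fun i => Matrix.of fun r c : Fin ℓ =>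
        B r ⟨(i : ℕ) * ℓ + (c : ℕ), by
          have hc : (c : ℕ) < ℓ := c.isLt
          have hi : (i : ℕ) + 1 ≤ k := i.isLt
          calc (i : ℕ) * ℓ + (c : ℕ) < ((i : ℕ) + 1) * ℓ := by
                rw [Nat.add_mul, Nat.one_mul]; omega
            _ ≤ k * ℓ := Nat.mul_le_mul_right ℓ hi⟩ with hD
  set e : Fin ℓ × Fin k ≃ Fin (k * ℓ) :=
    (Equiv.prodComm _ _).trans finProdFinEquiv with he0
  have h1 : segreDet k ℓ A B = ((segreMatrix k ℓ A B).submatrix e e).det :=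
    (Matrix.det_submatrix_equiv_self e _).symm
  have h2 : (segreMatrix k ℓ A B).submatrix e e = Matrix.blockDiagonal D := by
    ext ⟨j, i⟩ ⟨c, i'⟩
    have hm : ((e (c, i') : Fin (k * ℓ)) : ℕ) = (c : ℕ) + (i' : ℕ) * ℓ := by
      simp [e, finProdFinEquiv, Nat.mul_comm]
    simp only [Matrix.submatrix_apply, segreMatrix, Matrix.of_apply,
      Matrix.blockDiagonal_apply]
    have he : e (j, i) = finProdFinEquiv (i, j) := rfl
    rw [he, Equiv.symm_apply_apply]
    simp only [hA]
    rcases eq_or_ne i i' with h | h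
    · subst h
      have hij : (i : ℕ) * ℓ ≤ ((e (c, i) : Fin (k * ℓ)) : ℕ) ∧
          ((e (c, i) : Fin (k * ℓ)) : ℕ) < (i : ℕ) * ℓ + ℓ := by
        rw [hm]; have := c.isLt; omega
      rw [if_pos hij, if_pos rfl, one_mul]
      have heq : e (c, i) = (⟨(i : ℕ) * ℓ + (c : ℕ), by
          have hc : (c : ℕ) < ℓ := c.isLt
          have hi : (i : ℕ) + 1 ≤ k := i.isLt
          calc (i : ℕ) * ℓ + (c : ℕ) < ((i : ℕ) + 1) * ℓ := by
                rw [Nat.add_mul, Nat.one_mul]; omega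
            _ ≤ k * ℓ := Nat.mul_le_mul_right ℓ hi⟩ : Fin (k * ℓ)) := by
        exact Fin.ext (hm.trans (Nat.add_comm _ _))
      rw [heq]; rfl
    · have hij : ¬ ((i : ℕ) * ℓ ≤ ((e (c, i') : Fin (k * ℓ)) : ℕ) ∧
          ((e (c, i') : Fin (k * ℓ)) : ℕ) < (i : ℕ) * ℓ + ℓ) := by
        rw [hm]
        have := c.isLt
        intro ⟨h1, h2⟩
        apply h
        apply Fin.ext
        rcases lt_trichotomy (i : ℕ) (i' : ℕ) with hlt | heq | hgt
        · exfalso; nlinarith [Nat.succ_le_of_lt hlt]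
        · exact heq
        · exfalso; nlinarith [Nat.succ_le_of_lt hgt]
      rw [if_neg hij, if_neg h, zero_mul]
  rw [h1, h2, Matrix.det_blockDiagonal]
end

section
/- Let A be a 2×6 complex matrix and for i < j let [ij] denote its 2×2 minor on columns i,j. Define x₀ = [12][34][56] + [14][25][36], x₁ = −[13][25][46], x₂ = [12][35][46], x₃ = −[12][34][56], x₄ = [13][24][56]. Then the Segre cubic relation holds: x₀x₁x₃ − x₁x₂x₃ − x₀x₂x₄ − x₁x₂x₄ − x₁x₃x₄ − x₂x₃x₄ = 0. -/
/-- **The Segre cubic relation.**  For a `2 × 6` matrix `A` with minors `[ij]` (the paper's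
columns `1,…,6` are `0,…,5` here), the coefficients
`x₀ = [12][34][56] + [14][25][36]`, `x₁ = −[13][25][46]`, `x₂ = [12][35][46]`,
`x₃ = −[12][34][56]`, `x₄ = [13][24][56]` of the Segre determinant `Seg_{2,3}` satisfy the
Segre cubic `x₀x₁x₃ − x₁x₂x₃ − x₀x₂x₄ − x₁x₂x₄ − x₁x₃x₄ − x₂x₃x₄ = 0`. -/
theorem segre_cubic_relation (A : Matrix (Fin 2) (Fin 6) ℂ) (x₀ x₁ x₂ x₃ x₄ : ℂ)
    (h₀ : x₀ = minor2 A 0 1 * minor2 A 2 3 * minor2 A 4 5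
        + minor2 A 0 3 * minor2 A 1 4 * minor2 A 2 5)
    (h₁ : x₁ = -(minor2 A 0 2 * minor2 A 1 4 * minor2 A 3 5))
    (h₂ : x₂ = minor2 A 0 1 * minor2 A 2 4 * minor2 A 3 5)
    (h₃ : x₃ = -(minor2 A 0 1 * minor2 A 2 3 * minor2 A 4 5))
    (h₄ : x₄ = minor2 A 0 2 * minor2 A 1 3 * minor2 A 4 5) :
    x₀ * x₁ * x₃ - x₁ * x₂ * x₃ - x₀ * x₂ * x₄ - x₁ * x₂ * x₄ - x₁ * x₃ * x₄ - x₂ * x₃ * x₄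
      = 0 := by
  subst h₀ h₁ h₂ h₃ h₄
  simp only [minor2]
  ring
end
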